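/- arXiv:1408.2393 — 12 statements merged into one kernel-verified Lean document; each statement's English description precedes it below -/
import Mathlib

section
/- Let L be a relational first-order language and M a countable L-structure. Then M is II-homogeneous if and only if M is IA-homogeneous; that is, every isomorphism between finite substructures of M extends to an L-embedding of M into M if and only if every isomorphism between finite substructures of M extends to an L-automorphism of M. -/
open FirstOrder

/-- `M` is II-homogeneous: every isomorphism between finite substructures of `M`
extends to an `L`-embedding of `M` into `M`. -/
def IIHomogeneous (L : Language) (M : Type*) [L.Structure M] : Prop :=
  ∀ (A B : L.Substructure M), (A : Set M).Finite → (B : Set M).Finite →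
    ∀ e : A ≃[L] B, ∃ g : M ↪[L] M, ∀ a : A, g (a : M) = (e a : M)

/-- `M` is IA-homogeneous: every isomorphism between finite substructures of `M`
extends to an `L`-automorphism of `M`. -/
def IAHomogeneous (L : Language) (M : Type*) [L.Structure M] : Prop :=
  ∀ (A B : L.Substructure M), (A : Set M).Finite → (B : Set M).Finite →
    ∀ e : A ≃[L] B, ∃ g : M ≃[L] M, ∀ a : A, g (a : M) = (e a : M)

/-!
An II-homogeneous structure in a relational language is an extension pair with itself: there a
finitely generated partial isomorphism is finite, so it extends to a self-embedding, which can
then be restricted to the domain enlarged by any one point. For countable structures, back-and-forth along this extension property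
extends any finite partial isomorphism to an automorphism.
-/

namespace FirstOrder.Language

variable {L : Language} {M N : Type*} [L.Structure M] [L.Structure N]

theorem Embedding.apply_eq_of_le_toPartialEquiv {f : M ≃ₚ[L] N} {g : M ↪[L] N}
    (h : f ≤ g.toPartialEquiv) (x : f.dom) : g x = f.toEquiv x :=
  DFunLike.congr_fun (PartialEquiv.subtype_toEquiv_inclusion h) x

end FirstOrder.Language

open FirstOrder.Language

section

variable {L : Language} {M : Type*} [L.Structure M]

theorem IAHomogeneous.iiHomogeneous (h : IAHomogeneous L M) : IIHomogeneous L M :=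
  fun A B hA hB e =>
    let ⟨g, hg⟩ := h A B hA hB e
    ⟨g.toEmbedding, hg⟩

theorem IIHomogeneous.isExtensionPair [L.IsRelational] (h : IIHomogeneous L M) :
    L.IsExtensionPair M M := by
  rw [isExtensionPair_iff_exists_embedding_closure_singleton_sup]
  intro S hS f m
  have : Finite S := hS.finite
  have hrange : (f.toHom.range : Set M).Finite := Set.finite_range f
  obtain ⟨g, hg⟩ := h S f.toHom.range (Set.toFinite _) hrange f.equivRange
  refine ⟨g.comp (Substructure.subtype _), ?_⟩
  ext x
  exact (hg x).symm

theorem IIHomogeneous.iaHomogeneous [L.IsRelational] [Countable M] (h : IIHomogeneous L M) :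
    IAHomogeneous L M := by
  intro A B hA _ e
  have : Finite A := hA.to_subtype
  obtain ⟨g, hg⟩ := equiv_between_cg Structure.cg_of_countable Structure.cg_of_countable
    ⟨⟨A, B, e⟩, Substructure.FG.of_finite⟩ h.isExtensionPair h.isExtensionPair
  exact ⟨g, Embedding.apply_eq_of_le_toPartialEquiv hg⟩

end

theorem II_iff_IA (L : Language) [L.IsRelational] (M : Type*) [L.Structure M]
    [Countable M] : IIHomogeneous L M ↔ IAHomogeneous L M :=
  ⟨IIHomogeneous.iaHomogeneous, IAHomogeneous.iiHomogeneous⟩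
end

section
/- Let L be a relational first-order language and M a countable L-structure. Then M is MI-homogeneous if and only if M is MA-homogeneous; that is, every injective L-homomorphism between finite substructures of M extends to an L-embedding of M into M if and only if every injective L-homomorphism between finite substructures of M extends to an L-automorphism of M. -/
open FirstOrder

/-- `M` is MI-homogeneous: every injective `L`-homomorphism between finite substructures
of `M` extends to an `L`-embedding of `M` into `M`. -/
def MIHomogeneous (L : Language) (M : Type*) [L.Structure M] : Prop :=
  ∀ (A B : L.Substructure M), (A : Set M).Finite → (B : Set M).Finite →
    ∀ e : A →[L] B, Function.Injective e →
      ∃ g : M ↪[L] M, ∀ a : A, g (a : M) = (e a : M)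

/-- `M` is MA-homogeneous: every injective `L`-homomorphism between finite substructures
of `M` extends to an `L`-automorphism of `M`. -/
def MAHomogeneous (L : Language) (M : Type*) [L.Structure M] : Prop :=
  ∀ (A B : L.Substructure M), (A : Set M).Finite → (B : Set M).Finite →
    ∀ e : A →[L] B, Function.Injective e →
      ∃ g : M ≃[L] M, ∀ a : A, g (a : M) = (e a : M)

/-!
MI-homogeneity makes `M` an extension pair with itself: a finite partial isomorphism `f`
extends to a self-embedding `g`, and restricting `g` to `dom f ⊔ ⟨m⟩` extends `f` to `m`.
For countable `M`, back-and-forth then extends every finite partial isomorphism to an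
automorphism. An injective homomorphism `e` need not be a partial isomorphism (it may neither
reflect relations nor be onto its codomain), so it is first replaced by the restriction to
`dom e` of a self-embedding extending it.
-/

namespace FirstOrder.Language

open Substructure

variable {L : Language} {M N : Type*} [L.Structure M] [L.Structure N]

theorem Embedding.le_toPartialEquiv_iff (f : M ≃ₚ[L] N) (g : M ↪[L] N) :
    f ≤ g.toPartialEquiv ↔ ∀ a : f.dom, g a = f.toEquiv a :=
  ⟨fun h a ↦ congrFun (congrArg (⇑) (PartialEquiv.subtype_toEquiv_inclusion h)) a,
    fun h ↦ ⟨le_top, Embedding.ext fun a ↦ h a⟩⟩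

theorem isExtensionPair_of_forall_le_toPartialEquiv
    (h : ∀ f : L.FGEquiv M N, ∃ g : M ↪[L] N, f.1 ≤ g.toPartialEquiv) :
    L.IsExtensionPair M N := by
  rintro ⟨f, hf⟩ m
  obtain ⟨g, hfg⟩ := h ⟨f, hf⟩
  refine ⟨⟨g.toPartialEquiv.domRestrict (le_top : f.dom ⊔ closure L {m} ≤ _),
    hf.sup (fg_closure_singleton m)⟩, ?_, PartialEquiv.le_domRestrict f _ le_sup_left _ hfg⟩
  exact (le_sup_right : closure L {m} ≤ _) (subset_closure (Set.mem_singleton m))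

theorem _root_.MIHomogeneous.exists_le_toPartialEquiv [L.IsRelational] (h : MIHomogeneous L M)
    (f : L.FGEquiv M M) : ∃ g : M ↪[L] M, f.1 ≤ g.toPartialEquiv := by
  obtain ⟨f, hf⟩ := f
  have hcod : f.cod.FG := f.dom_fg_iff_cod_fg.1 hf
  obtain ⟨g, hg⟩ := h f.dom f.cod (@Set.toFinite _ _ hf.finite) (@Set.toFinite _ _ hcod.finite)
    f.toEquiv.toHom f.toEquiv.injective
  exact ⟨g, (Embedding.le_toPartialEquiv_iff f g).2 hg⟩

theorem _root_.MIHomogeneous.isExtensionPair [L.IsRelational] (h : MIHomogeneous L M) :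
    L.IsExtensionPair M M :=
  isExtensionPair_of_forall_le_toPartialEquiv h.exists_le_toPartialEquiv

end FirstOrder.Language

open FirstOrder.Language in
theorem MI_iff_MA (L : Language) [L.IsRelational] (M : Type*) [L.Structure M]
    [Countable M] : MIHomogeneous L M ↔ MAHomogeneous L M := by
  refine ⟨fun h A B hA hB e he ↦ ?_, fun h A B hA hB e he ↦ ?_⟩
  · obtain ⟨g, hg⟩ := h A B hA hB e he
    let f : L.FGEquiv M M := ⟨g.toPartialEquiv.domRestrict (le_top : A ≤ ⊤),
      Substructure.fg_iff_finite.2 hA.to_subtype⟩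
    obtain ⟨F, hF⟩ := equiv_between_cg Structure.cg_of_countable Structure.cg_of_countable f
      h.isExtensionPair h.isExtensionPair
    have hgf := (Embedding.le_toPartialEquiv_iff f.1 g).1 (PartialEquiv.domRestrict_le _ _)
    refine ⟨F, fun a ↦ ?_⟩
    rw [← hg a, hgf a]
    exact (Embedding.le_toPartialEquiv_iff f.1 F.toEmbedding).1 hF a
  · obtain ⟨g, hg⟩ := h A B hA hB e he
    exact ⟨g.toEmbedding, hg⟩
end

section
/- Let L be a relational first-order language and M a countable L-structure. Then M is HI-homogeneous if and only if M is HA-homogeneous; that is, every L-homomorphism between finite substructures of M extends to an L-embedding of M into M if and only if every L-homomorphism between finite substructures of M extends to an L-automorphism of M. -/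
open FirstOrder

/-- `M` is HI-homogeneous: every `L`-homomorphism between finite substructures
of `M` extends to an `L`-embedding of `M` into `M`. -/
def HIHomogeneous (L : Language) (M : Type*) [L.Structure M] : Prop :=
  ∀ (A B : L.Substructure M), (A : Set M).Finite → (B : Set M).Finite →
    ∀ e : A →[L] B, ∃ g : M ↪[L] M, ∀ a : A, g (a : M) = (e a : M)

/-- `M` is HA-homogeneous: every `L`-homomorphism between finite substructures
of `M` extends to an `L`-automorphism of `M`. -/
def HAHomogeneous (L : Language) (M : Type*) [L.Structure M] : Prop :=
  ∀ (A B : L.Substructure M), (A : Set M).Finite → (B : Set M).Finite →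
    ∀ e : A →[L] B, ∃ g : M ≃[L] M, ∀ a : A, g (a : M) = (e a : M)


/-! Since every homomorphism between finite substructures extends to an embedding, an embedding `g`
can be inverted on a finite set `s` by an embedding `h`. Extending the map that is `g` on `s` and
sends `h m` to `m` gives an embedding that agrees with `g` on `s` and has `m` in its range. Running
this back step along an enumeration of `M` (the forth step is free, embeddings being total) yields
a sequence of embeddings, each agreeing with the previous one on a growing chain of finite sets
exhausting `M`, whose images of these sets also exhaust `M`; its pointwise limit is an automorphism. -/

open Filter

namespace FirstOrder.Language

open Structure

def PreservesRelOn (L : Language) {M N : Type*} [L.Structure M] [L.Structure N] (f : M → N)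
    (s : Set M) : Prop :=
  ∀ ⦃n⦄ (r : L.Relations n) (x : Fin n → M), (∀ i, x i ∈ s) → RelMap r x → RelMap r (f ∘ x)

variable {L : Language} {M N : Type*} [L.Structure M] [L.Structure N]

theorem Embedding.preservesRelOn_of_leftInvOn (h : N ↪[L] M) {p : M → N} {s : Set M}
    (hp : Set.LeftInvOn h p s) : L.PreservesRelOn p s := by
  intro n r x hx hr
  rw [← h.map_rel r]
  convert hr using 1
  exact funext fun i => hp (hx i)

theorem exists_equiv_eqOn_of_exhaustive (g : ℕ → M ↪[L] N) {s : ℕ → Set M} (hmono : Monotone s)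
    (hcoh : ∀ n, Set.EqOn (g (n + 1)) (g n) (s n)) (hcover : ∀ x, ∃ n, x ∈ s n)
    (hsurj : ∀ y, ∃ n, y ∈ g n '' s n) : ∃ F : M ≃[L] N, ∀ n, Set.EqOn F (g n) (s n) := by
  have hstable : ∀ {a b}, a ≤ b → Set.EqOn (g b) (g a) (s a) := by
    intro a b hab
    induction b, hab using Nat.le_induction with
    | base => exact Set.eqOn_refl _ _
    | succ b hab ih => exact fun x hx => (hcoh b (hmono hab hx)).trans (ih hx)
  choose k hk using hcover
  let F : M → N := fun x => g (k x) x
  have hF : ∀ x, ∀ᶠ n in atTop, F x = g n x := fun x =>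
    eventually_atTop.2 ⟨k x, fun n hn => (hstable hn (hk x)).symm⟩
  have hF_tuple : ∀ {n} (x : Fin n → M), ∀ᶠ m in atTop, F ∘ x = g m ∘ x := fun x =>
    (eventually_all.2 fun i => hF (x i)).mono fun _ hm => funext hm
  have hEqOn : ∀ n, Set.EqOn F (g n) (s n) := fun n x hx =>
    let ⟨_, hm, hnm⟩ := ((hF x).and (eventually_ge_atTop n)).exists
    hm.trans (hstable hnm hx)
  have hinj : Function.Injective F := fun x y hxy =>
    let ⟨n, hx, hy⟩ := ((hF x).and (hF y)).exists
    (g n).injective (hx.symm.trans (hxy.trans hy))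
  have hsurj : Function.Surjective F := fun y =>
    let ⟨n, x, hx, hy⟩ := hsurj y
    ⟨x, (hEqOn n hx).trans hy⟩
  refine ⟨⟨Equiv.ofBijective F ⟨hinj, hsurj⟩, fun f x => ?_, fun r x => ?_⟩, hEqOn⟩
  · obtain ⟨n, hn, hxn⟩ := ((hF (funMap f x)).and (hF_tuple x)).exists
    change F (funMap f x) = funMap f (F ∘ x)
    rw [hn, hxn, (g n).map_fun]
  · obtain ⟨n, hn⟩ := (hF_tuple x).exists
    change RelMap r (F ∘ x) ↔ RelMap r x
    rw [hn, (g n).map_rel]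

end FirstOrder.Language

namespace HIHomogeneous

open FirstOrder.Language

variable {L : Language} [L.IsRelational] {M : Type*} [L.Structure M]

theorem exists_embedding_eqOn (hHI : HIHomogeneous L M) {s : Set M} (hs : s.Finite)
    {f : M → M} (hf : L.PreservesRelOn f s) : ∃ g : M ↪[L] M, Set.EqOn g f s := by
  let A : L.Substructure M := ⟨s, fun f => isEmptyElim f⟩
  let B : L.Substructure M := ⟨f '' s, fun f => isEmptyElim f⟩
  let e : A →[L] B :=
    { toFun := fun a => ⟨f a, Set.mem_image_of_mem f a.2⟩
      map_fun' := fun f => isEmptyElim f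
      map_rel' := fun r x => hf r (fun i => x i) (fun i => (x i).2) }
  obtain ⟨g, hg⟩ := hHI A B hs (hs.image f) e
  exact ⟨g, fun x hx => hg ⟨x, hx⟩⟩

theorem exists_leftInvOn [Nonempty M] (hHI : HIHomogeneous L M) (g : M ↪[L] M)
    {s : Set M} (hs : s.Finite) : ∃ h : M ↪[L] M, Set.LeftInvOn h g s := by
  have hinv : Set.LeftInvOn g (Function.invFun g) (g '' s) := by
    rintro _ ⟨x, -, rfl⟩
    exact Function.invFun_eq ⟨x, rfl⟩
  obtain ⟨h, hh⟩ := hHI.exists_embedding_eqOn (hs.image g) (g.preservesRelOn_of_leftInvOn hinv)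
  exact ⟨h, fun x hx =>
    (hh (Set.mem_image_of_mem g hx)).trans (Function.leftInverse_invFun g.injective x)⟩

theorem exists_embedding_eqOn_mem_range (hHI : HIHomogeneous L M) (g : M ↪[L] M)
    {s : Set M} (hs : s.Finite) (m : M) :
    ∃ g' : M ↪[L] M, Set.EqOn g' g s ∧ m ∈ Set.range g' := by
  classical
  have : Nonempty M := ⟨m⟩
  obtain ⟨h, hh⟩ := hHI.exists_leftInvOn g hs
  -- `h ∘ p = id` on `insert (h m) s` and `h` is injective, so any extension of `p` sends `h m` to `m`
  let p := s.piecewise g (fun _ => m)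
  have hps : Set.LeftInvOn h p s := fun y hy => by
    simp only [p, Set.piecewise_eq_of_mem _ _ _ hy]
    exact hh hy
  have hp : Set.LeftInvOn h p (insert (h m) s) := by
    rintro y (rfl | hy)
    · by_cases hm : h m ∈ s
      · exact hps hm
      · simp only [p, Set.piecewise_eq_of_notMem _ _ _ hm]
    · exact hps hy
  obtain ⟨g', hg'⟩ :=
    hHI.exists_embedding_eqOn (hs.insert (h m)) (h.preservesRelOn_of_leftInvOn hp)
  refine ⟨g', fun x hx => (hg' (Set.mem_insert_of_mem _ hx)).trans (s.piecewise_eq_of_mem _ _ hx),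
    h m, ?_⟩
  exact (hg' (Set.mem_insert _ _)).trans (h.injective (hp (Set.mem_insert _ _)))

theorem exists_equiv_eqOn [Countable M] (hHI : HIHomogeneous L M) (g : M ↪[L] M) {s : Set M}
    (hs : s.Finite) : ∃ F : M ≃[L] M, Set.EqOn F g s := by
  classical
  rcases isEmpty_or_nonempty M with hM | hM
  · exact ⟨Language.Equiv.refl L M, fun x => isEmptyElim x⟩
  obtain ⟨φ, hφ⟩ := exists_surjective_nat M
  have step : ∀ (q : (M ↪[L] M) × Finset M) (m : M), ∃ q' : (M ↪[L] M) × Finset M,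
      q.2 ⊆ q'.2 ∧ Set.EqOn q'.1 q.1 q.2 ∧ m ∈ q'.2 ∧ m ∈ q'.1 '' q'.2 := by
    rintro ⟨g, t⟩ m
    obtain ⟨g', hg', x, rfl⟩ := hHI.exists_embedding_eqOn_mem_range g t.finite_toSet m
    exact ⟨(g', insert (g' x) (insert x t)), (Finset.subset_insert _ _).trans
      (Finset.subset_insert _ _), hg', Finset.mem_insert_self _ _,
      x, by simp, rfl⟩
  choose next hnext_sub hnext_eqOn hnext_mem hnext_image using step
  let seq : ℕ → (M ↪[L] M) × Finset M := fun n =>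
    Nat.rec (g, hs.toFinset) (fun n q => next q (φ n)) n
  obtain ⟨F, hF⟩ := exists_equiv_eqOn_of_exhaustive (fun n => (seq n).1)
    (s := fun n => ((seq n).2 : Set M))
    (monotone_nat_of_le_succ fun n => Finset.coe_subset.2 (hnext_sub (seq n) (φ n)))
    (fun n => hnext_eqOn (seq n) (φ n))
    (fun x => let ⟨n, hn⟩ := hφ x; ⟨n + 1, hn ▸ hnext_mem (seq n) (φ n)⟩)
    (fun y => let ⟨n, hn⟩ := hφ y; ⟨n + 1, hn ▸ hnext_image (seq n) (φ n)⟩)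
  exact ⟨F, fun x hx => hF 0 (hs.mem_toFinset.2 hx)⟩

end HIHomogeneous

theorem HI_iff_HA (L : Language) [L.IsRelational] (M : Type*) [L.Structure M]
    [Countable M] : HIHomogeneous L M ↔ HAHomogeneous L M := by
  constructor
  · intro hHI A B hA hB e
    obtain ⟨g, hg⟩ := hHI A B hA hB e
    obtain ⟨F, hF⟩ := hHI.exists_equiv_eqOn g hA
    exact ⟨F, fun a => (hF a.2).trans (hg a)⟩
  · intro hHA A B hA hB e
    obtain ⟨g, hg⟩ := hHA A B hA hB e
    exact ⟨g.toEmbedding, hg⟩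
end

section
/- Let P be a countable partial order which is IĒ-homogeneous and which is not a chain (i.e., there exist a, b ∈ P with a ∥ b). Then for every x ∈ P there exists y ∈ P with x ∥ y. -/
/-- `x` and `y` are incomparable in a poset. -/
def Incomp {P : Type*} [PartialOrder P] (x y : P) : Prop := ¬ x ≤ y ∧ ¬ y ≤ x

/-- A finite partial isomorphism of a poset `P`. -/
def IsFinPartIso {P : Type*} [PartialOrder P] (A : Finset P) (f : P → P) : Prop :=
  ∀ a₁ ∈ A, ∀ a₂ ∈ A, (a₁ ≤ a₂ ↔ f a₁ ≤ f a₂)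

/-- `P` is IĒ-homogeneous: every finite partial isomorphism of `P` extends to a
surjective ≤-preserving map `P → P`. -/
def IEbarHomogeneous (P : Type*) [PartialOrder P] : Prop :=
  ∀ (A : Finset P) (f : P → P), IsFinPartIso A f →
    ∃ g : P → P, Monotone g ∧ Function.Surjective g ∧ ∀ a ∈ A, g a = f a

/-! Given `a ∥ b`, extend the one-point partial isomorphism `x ↦ a` to a surjective monotone
`g`; any `y` with `g y = b` is incomparable to `x`, since comparability of `x` and `y` would
be carried by `g` to comparability of `a` and `b`. -/

theorem isFinPartIso_singleton {P : Type*} [PartialOrder P] (x : P) (f : P → P) :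
    IsFinPartIso {x} f := by
  intro a₁ h₁ a₂ h₂
  rw [Finset.mem_singleton] at h₁ h₂
  subst h₁ h₂
  exact iff_of_true le_rfl le_rfl

theorem Incomp.of_map {P Q : Type*} [PartialOrder P] [PartialOrder Q] {g : P → Q}
    (hg : Monotone g) {x y : P} (h : Incomp (g x) (g y)) : Incomp x y :=
  ⟨fun hxy => h.1 (hg hxy), fun hyx => h.2 (hg hyx)⟩

theorem IEbarHomogeneous.exists_surjective_monotone_apply_eq {P : Type*} [PartialOrder P]
    (hIE : IEbarHomogeneous P) (x a : P) :
    ∃ g : P → P, Monotone g ∧ Function.Surjective g ∧ g x = a := by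
  obtain ⟨g, hmono, hsurj, hext⟩ := hIE {x} (fun _ => a) (isFinPartIso_singleton x _)
  exact ⟨g, hmono, hsurj, hext x (Finset.mem_singleton_self x)⟩

theorem IEbar_incomparable_point_general {P : Type*} [PartialOrder P]
    (hIE : IEbarHomogeneous P) (hnc : ∃ a b : P, Incomp a b) :
    ∀ x : P, ∃ y : P, Incomp x y := by
  obtain ⟨a, b, hab⟩ := hnc
  intro x
  obtain ⟨g, hmono, hsurj, hgx⟩ := hIE.exists_surjective_monotone_apply_eq x a
  obtain ⟨y, hgy⟩ := hsurj b
  refine ⟨y, Incomp.of_map hmono ?_⟩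
  rwa [hgx, hgy]

theorem IEbar_incomparable_point {P : Type*} [PartialOrder P] [Countable P]
    (hIE : IEbarHomogeneous P) (hnc : ∃ a b : P, Incomp a b) :
    ∀ x : P, ∃ y : P, Incomp x y :=
  IEbar_incomparable_point_general hIE hnc
end

section
/- The ordered rationals (ℚ, ≤) are H̄Ē-homogeneous: every ≤-preserving map f between finite subsets of ℚ (i.e., f : A → ℚ with A ⊆ ℚ finite and a₁ ≤ a₂ → f a₁ ≤ f a₂) extends to a surjective ≤-preserving map g : ℚ → ℚ. -/
/-! Add the points of `A` in increasing order. When `m` is added above `b = max A`, keep the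
previous extension on `(-∞, b]` and continue it on `(b, ∞)` by the piecewise affine map joining
`(b, f b)` to `(m, f m)` with slope `1` outside `[b, m]`. Gluing two monotone surjections that
agree at `b` gives a monotone surjection. -/

open Function

section Glue

variable {α β : Type*} [LinearOrder α] [LinearOrder β] {g₁ g₂ : α → β} {b : α}

theorem Monotone.ite_le (h₁ : Monotone g₁) (h₂ : Monotone g₂) (hb : g₁ b ≤ g₂ b) :
    Monotone fun x => if x ≤ b then g₁ x else g₂ x := by
  intro x y hxy
  dsimp only
  split_ifs with hx hy hy
  · exact h₁ hxy
  · exact (h₁ hx).trans (hb.trans (h₂ (le_of_not_ge hy)))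
  · exact absurd (hxy.trans hy) hx
  · exact h₂ hxy

theorem Function.Surjective.ite_le (h₁ : Monotone g₁) (h₂ : Monotone g₂) (hb : g₁ b = g₂ b)
    (s₁ : Surjective g₁) (s₂ : Surjective g₂) :
    Surjective fun x => if x ≤ b then g₁ x else g₂ x := by
  intro y
  rcases le_or_gt y (g₁ b) with hy | hy
  · obtain ⟨x, rfl⟩ := s₁ y
    by_cases hx : x ≤ b
    · exact ⟨x, if_pos hx⟩
    · exact ⟨b, by simp only [le_refl, if_true]; exact le_antisymm (h₁ (le_of_not_ge hx)) hy⟩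
  · obtain ⟨x, rfl⟩ := s₂ y
    have hx : ¬x ≤ b := fun hx => (h₂ hx).not_gt (hb ▸ hy)
    exact ⟨x, if_neg hx⟩

end Glue

section Ramp

variable {K : Type*} [Field K] [LinearOrder K] [IsStrictOrderedRing K] {b c m v : K}

/-- The piecewise affine map through `(b, c)` and `(m, v)` with slope `1` outside `[b, m]`. -/
def ramp (b c m v x : K) : K :=
  c + min (x - b) 0 + (v - c) / (m - b) * (max b (min x m) - b) + max (x - m) 0

theorem ramp_monotone (hbm : b ≤ m) (hcv : c ≤ v) : Monotone (ramp b c m v) := by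
  intro x y hxy
  have : 0 ≤ (v - c) / (m - b) := div_nonneg (sub_nonneg.2 hcv) (sub_nonneg.2 hbm)
  unfold ramp
  gcongr

theorem ramp_left (hbm : b ≤ m) : ramp b c m v b = c := by
  simp [ramp, hbm]

theorem ramp_right (hbm : b < m) : ramp b c m v m = v := by
  have : m - b ≠ 0 := sub_ne_zero.2 hbm.ne'
  simp [ramp, hbm.le, this]

theorem ramp_surjective (hbm : b < m) : Surjective (ramp b c m v) := by
  have hmb : m - b ≠ 0 := sub_ne_zero.2 hbm.ne'
  intro y
  rcases le_or_gt y c with hyc | hyc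
  · refine ⟨b + (y - c), ?_⟩
    have : b + (y - c) ≤ m := by linarith
    simp [ramp, hyc, this]
  rcases le_or_gt v y with hvy | hvy
  · refine ⟨m + (y - v), ?_⟩
    have : 0 ≤ m + (y - v) - b := by linarith
    simp [ramp, hvy, hbm.le, this, hmb]
  set t := (y - c) / (v - c) * (m - b)
  have hvc : 0 < v - c := by linarith
  have ht₀ : 0 ≤ t := by positivity
  have ht₁ : t ≤ m - b := by
    exact mul_le_of_le_one_left (by linarith) ((div_le_one hvc).2 (by linarith))
  refine ⟨b + t, ?_⟩
  have h₁ : min (b + t - b) 0 = 0 := by simp [ht₀]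
  have h₂ : max b (min (b + t) m) = b + t := by
    rw [min_eq_left (by linarith), max_eq_right (by linarith)]
  have h₃ : max (b + t - m) 0 = 0 := max_eq_right (by linarith)
  rw [ramp, h₁, h₂, h₃, add_sub_cancel_left]
  simp only [t]
  field_simp
  ring

end Ramp

theorem Finset.exists_monotone_surjective_extension {K : Type*} [Field K] [LinearOrder K]
    [IsStrictOrderedRing K] (A : Finset K) (f : K → K) (hf : MonotoneOn f A) :
    ∃ g : K → K, Monotone g ∧ Surjective g ∧ Set.EqOn g f A := by
  induction A using Finset.induction_on_max with
  | empty => exact ⟨id, monotone_id, surjective_id, by simp⟩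
  | insert m s hlt ih =>
    obtain ⟨g, g_mono, g_surj, g_eq⟩ := ih (hf.mono (by simp))
    rcases s.eq_empty_or_nonempty with rfl | hs
    · refine ⟨fun x => x + (f m - m), fun x y h => by simpa, fun y => ⟨y - (f m - m), by simp⟩, ?_⟩
      simp
    set b := s.max' hs
    have hb : b ∈ s := s.max'_mem hs
    have hbm : b < m := hlt b hb
    have hfb : f b ≤ f m := hf (mem_insert_of_mem hb) (mem_insert_self m s) hbm.le
    have hgb : g b = ramp b (f b) m (f m) b := by rw [ramp_left hbm.le, g_eq hb]
    refine ⟨fun x => if x ≤ b then g x else ramp b (f b) m (f m) x,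
      g_mono.ite_le (ramp_monotone hbm.le hfb) hgb.le,
      g_surj.ite_le g_mono (ramp_monotone hbm.le hfb) hgb (ramp_surjective hbm), ?_⟩
    intro a ha
    rcases Finset.mem_insert.1 ha with rfl | ha
    · simp [hbm.not_ge, ramp_right hbm]
    · exact (if_pos (s.le_max' a ha)).trans (g_eq ha)

/-- The ordered rationals are H̄Ē-homogeneous: every ≤-preserving map between finite
subsets of `ℚ` extends to a surjective ≤-preserving map `ℚ → ℚ`. -/
theorem rat_HbarEbar :
    ∀ (A : Finset ℚ) (f : ℚ → ℚ), (∀ a₁ ∈ A, ∀ a₂ ∈ A, a₁ ≤ a₂ → f a₁ ≤ f a₂) →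
      ∃ g : ℚ → ℚ, Monotone g ∧ Function.Surjective g ∧ ∀ a ∈ A, g a = f a :=
  fun A f hf => A.exists_monotone_surjective_extension f fun _ ha _ hb => hf _ ha _ hb
end

section
/- Let B_ω be the countably infinite disjoint union of copies of (ℚ, <), i.e., ℕ × ℚ ordered by (i, q) ≤ (j, r) iff i = j and q ≤ r. Then: (a) B_ω is MB-homogeneous: every injective <-preserving map between finite subsets of B_ω extends to a bijective <-preserving map B_ω → B_ω; (b) B_ω is HE-homogeneous: every <-preserving map between finite subsets of B_ω extends to a surjective <-preserving map B_ω → B_ω; (c) B_ω is H̄Ē-homogeneous: every ≤-preserving map between finite subsets of B_ω extends to a surjective ≤-preserving map B_ω → B_ω. -/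
/-- The order on a disjoint union `ι × ℚ` of copies of `ℚ`:
`(i, q) ≤ (j, r)` iff `i = j` and `q ≤ r`. -/
def Dle {ι : Type*} (x y : ι × ℚ) : Prop := x.1 = y.1 ∧ x.2 ≤ y.2

/-- The strict order: `(i, q) < (j, r)` iff `i = j` and `q < r`. -/
def Dlt {ι : Type*} (x y : ι × ℚ) : Prop := x.1 = y.1 ∧ x.2 < y.2

/-!
A map preserving `<` or `≤` on a finite set sends the points it sees in one copy of `ℚ` into a
single copy, so it is given by a map `τ` between copies together with a finite partial map of `ℚ`
on each copy. The extension is built copy by copy: the finitely many copies that are met are sent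
according to `τ`, the remaining ones are sent bijectively, by a cardinality argument, onto the
copies not yet hit (onto all copies in (b) and (c)), and on each copy the partial map is extended
to an order isomorphism by back-and-forth (to a monotone step function in case (c)). For (a) the
copies that `τ` sends to a common copy `m` must share `m` out: `m` is split into dense pieces, one
for each of them and containing its prescribed values, and each copy is mapped onto its piece, a
dense subset of `ℚ` being again order isomorphic to `ℚ`. The pieces come from colouring a rational
by the exponent of `2` in its denominator, after recolouring the finitely many prescribed values.
-/

open Function

namespace Order

theorem exists_orderIso_extends_of_strictMonoOn {α β : Type*} [LinearOrder α] [LinearOrder β]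
    [Countable α] [DenselyOrdered α] [NoMinOrder α] [NoMaxOrder α] [Nonempty α]
    [Countable β] [DenselyOrdered β] [NoMinOrder β] [NoMaxOrder β] [Nonempty β]
    (S : Finset α) (k : α → β) (hk : StrictMonoOn k S) :
    ∃ e : α ≃o β, ∀ s ∈ S, e s = k s := by
  cases nonempty_encodable α
  cases nonempty_encodable β
  let p : PartialIso α β := ⟨S.image fun s ↦ (s, k s), by
    simp only [Finset.mem_image]
    rintro _ ⟨s, hs, rfl⟩ _ ⟨t, ht, rfl⟩
    exact (hk.cmp_map_eq hs ht).symm⟩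
  let cofinals : α ⊕ β → Cofinal (PartialIso α β) := fun x ↦
    Sum.recOn x (PartialIso.definedAtLeft β) (PartialIso.definedAtRight α)
  -- Cantor's back-and-forth, started from `p` instead of the empty partial isomorphism
  let I : Ideal (PartialIso α β) := idealOfCofinals p cofinals
  let F a := PartialIso.funOfIdeal a I (cofinal_meets_idealOfCofinals _ cofinals (Sum.inl a))
  let G b := PartialIso.invOfIdeal b I (cofinal_meets_idealOfCofinals _ cofinals (Sum.inr b))
  refine ⟨OrderIso.ofCmpEqCmp (fun a ↦ (F a).val) (fun b ↦ (G b).val) fun a b ↦ ?_, ?_⟩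
  · obtain ⟨f, hf, ha⟩ := (F a).prop
    obtain ⟨g, hg, hb⟩ := (G b).prop
    obtain ⟨m, -, fm, gm⟩ := I.directed _ hf _ hg
    exact m.prop (a, _) (fm ha) (_, b) (gm hb)
  · intro s hs
    obtain ⟨f, hf, hfs⟩ := (F s).prop
    obtain ⟨m, -, fm, pm⟩ := I.directed _ hf _ (mem_idealOfCofinals p cofinals)
    have := m.prop (s, _) (fm hfs) (s, k s) (pm (Finset.mem_image_of_mem _ hs))
    exact (cmp_eq_eq_iff _ _).1 (this.symm.trans (cmp_self_eq_eq s))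

end Order

theorem Finset.exists_monotone_extends {α β : Type*} [LinearOrder α] [LinearOrder β] [Nonempty β]
    (S : Finset α) (k : α → β) (hk : MonotoneOn k S) :
    ∃ h : α → β, Monotone h ∧ ∀ s ∈ S, h s = k s := by
  classical
  rcases S.eq_empty_or_nonempty with rfl | hS
  · exact ⟨fun _ ↦ Classical.arbitrary β, monotone_const, by simp⟩
  set s₀ := S.min' hS
  have hk₀ : ∀ s ∈ S, k s₀ ≤ k s := fun s hs ↦ hk (S.min'_mem hS) hs (S.min'_le s hs)
  -- each term jumps from `k s₀` up to `k s` as `q` passes `s`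
  refine ⟨fun q ↦ S.sup' hS fun s ↦ if s ≤ q then k s else k s₀, fun q q' hqq' ↦ ?_, ?_⟩
  · refine Finset.sup'_mono_fun fun s hs ↦ ?_
    by_cases hsq : s ≤ q
    · simp [hsq, hsq.trans hqq']
    · split_ifs <;> simp [hk₀ s hs]
  · intro t ht
    refine le_antisymm (Finset.sup'_le _ _ fun s hs ↦ ?_) (Finset.le_sup'_of_le _ ht (by simp))
    split_ifs with hst
    exacts [hk hs ht hst, hk₀ t ht]

namespace Dense

variable {α : Type*} [LinearOrder α] [TopologicalSpace α] [OrderTopology α] [DenselyOrdered α]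
  {D : Set α}

theorem denselyOrdered (hD : Dense D) : DenselyOrdered D :=
  ⟨fun a b hab ↦ by
    obtain ⟨c, hc, hac, hcb⟩ := hD.exists_between (Subtype.coe_lt_coe.2 hab)
    exact ⟨⟨c, hc⟩, hac, hcb⟩⟩

theorem noMinOrder [NoMinOrder α] (hD : Dense D) : NoMinOrder D :=
  ⟨fun a ↦ by
    obtain ⟨b, hb⟩ := exists_lt (a : α)
    obtain ⟨c, hc, -, hca⟩ := hD.exists_between hb
    exact ⟨⟨c, hc⟩, hca⟩⟩

theorem noMaxOrder [NoMaxOrder α] (hD : Dense D) : NoMaxOrder D :=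
  ⟨fun a ↦ by
    obtain ⟨b, hb⟩ := exists_gt (a : α)
    obtain ⟨c, hc, hac, -⟩ := hD.exists_between hb
    exact ⟨⟨c, hc⟩, hac⟩⟩

theorem exists_strictMono_range_eq_extends [Countable α] [NoMinOrder α] [NoMaxOrder α]
    [Nonempty α] (hD : Dense D) (S : Finset α) (k : α → α) (hk : StrictMonoOn k S)
    (hkD : ∀ s ∈ S, k s ∈ D) :
    ∃ h : α → α, StrictMono h ∧ Set.range h = D ∧ ∀ s ∈ S, h s = k s := by
  have := hD.denselyOrdered
  have := hD.noMinOrder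
  have := hD.noMaxOrder
  have : Nonempty D := hD.nonempty.to_subtype
  classical
  let k' : α → D := fun a ↦ if ha : k a ∈ D then ⟨k a, ha⟩ else Classical.arbitrary D
  obtain ⟨e, he⟩ := Order.exists_orderIso_extends_of_strictMonoOn S k' fun s hs t ht hst ↦ by
    simpa [k', hkD s hs, hkD t ht] using hk hs ht hst
  refine ⟨Subtype.val ∘ e, (Subtype.strictMono_coe (· ∈ D)).comp e.strictMono, ?_, ?_⟩
  · rw [e.surjective.range_comp, Subtype.range_coe]
  · intro s hs
    simp [he s hs, k', hkD s hs]

end Dense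

namespace Rat

theorem exists_den_eq_two_pow_mem_Ioo {a b : ℚ} (hab : a < b) :
    ∃ N : ℕ, ∀ e ≥ N, ∃ q ∈ Set.Ioo a b, q.den = 2 ^ e := by
  obtain ⟨N, hN⟩ := pow_unbounded_of_one_lt (2 / (b - a)) one_lt_two
  refine ⟨N, fun e he ↦ ?_⟩
  have hpos : (0 : ℚ) < 2 ^ e := by positivity
  have hwide : 2 < (b - a) * 2 ^ e := by
    have := (div_lt_iff₀' (sub_pos.2 hab)).1 hN
    nlinarith [pow_le_pow_right₀ (one_le_two : (1 : ℚ) ≤ 2) he]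
  -- `2 * m + 1` is the first odd integer above `a * 2 ^ e`
  set m : ℤ := ⌊(a * 2 ^ e - 1) / 2⌋ + 1
  have hm₁ : a * 2 ^ e < 2 * m + 1 := by
    have := Int.lt_floor_add_one ((a * 2 ^ e - 1) / 2)
    push_cast [m]; linarith
  have hm₂ : (2 * m + 1 : ℚ) ≤ a * 2 ^ e + 2 := by
    have := Int.floor_le ((a * 2 ^ e - 1) / 2)
    push_cast [m]; linarith
  refine ⟨((2 * m + 1 : ℤ) : ℚ) / ((2 ^ e : ℤ) : ℚ), ⟨?_, ?_⟩, ?_⟩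
  · rw [lt_div_iff₀ (by exact_mod_cast hpos)]; push_cast; linarith
  · rw [div_lt_iff₀ (by exact_mod_cast hpos)]; push_cast; linarith
  · have hodd : Odd (2 * m + 1).natAbs := Int.natAbs_odd.2 (odd_two_mul_add_one m)
    have := Rat.den_div_eq_of_coprime (a := 2 * m + 1) (b := 2 ^ e) (by positivity)
      (by simpa [Int.natAbs_pow] using (Nat.coprime_two_right.2 hodd).pow_right e)
    exact_mod_cast this

theorem exists_dense_coloring (κ : Type*) [Finite κ] [Nonempty κ] :
    ∃ c : ℚ → κ, ∀ i, Dense (c ⁻¹' {i}) := by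
  obtain ⟨n, ⟨e⟩⟩ := Finite.exists_equiv_fin κ
  have : NeZero n := ⟨fun hn ↦ (hn ▸ e).isEmpty.false (Classical.arbitrary κ)⟩
  refine ⟨fun q ↦ e.symm (Fin.ofNat n (q.den.factorization 2)), fun i ↦
    dense_of_exists_between fun a b hab ↦ ?_⟩
  obtain ⟨N, hN⟩ := exists_den_eq_two_pow_mem_Ioo hab
  obtain ⟨q, hq, hden⟩ := hN (N * n + e i) (by nlinarith [NeZero.pos n])
  refine ⟨q, ?_, hq⟩
  simp [Equiv.symm_apply_eq, Fin.ext_iff, hden, Nat.Prime.factorization_self Nat.prime_two,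
    Nat.add_mod, Nat.mod_eq_of_lt (e i).isLt]

theorem exists_dense_partition_superset {κ : Type*} [Finite κ] [Nonempty κ] (F : κ → Finset ℚ)
    (hF : Pairwise (Disjoint on F)) :
    ∃ D : κ → Set ℚ, (∀ i, Dense (D i)) ∧ (∀ i, ↑(F i) ⊆ D i) ∧ Pairwise (Disjoint on D) ∧
      ∀ y, ∃ i, y ∈ D i := by
  classical
  have := Fintype.ofFinite κ
  obtain ⟨c, hc⟩ := exists_dense_coloring κ
  set U := Finset.univ.biUnion F
  have hU : ∀ i, ∀ y ∈ F i, y ∈ U := fun i y hy ↦ Finset.mem_biUnion.2 ⟨i, by simp, hy⟩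
  refine ⟨fun i ↦ {y | y ∈ F i ∨ y ∉ U ∧ c y = i}, fun i ↦ ((hc i).sdiff_finset U).mono ?_,
    fun i y hy ↦ Or.inl hy, fun i j hij ↦ Set.disjoint_left.2 ?_, fun y ↦ ?_⟩
  · rintro y ⟨hy, hyU⟩
    exact Or.inr ⟨hyU, hy⟩
  · rintro y (hy | ⟨hyU, rfl⟩) (hy' | ⟨hyU', hcy⟩)
    exacts [Finset.disjoint_left.1 (hF hij) hy hy', hyU' (hU _ _ hy), hyU (hU _ _ hy'), hij hcy]
  · by_cases hy : y ∈ U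
    · obtain ⟨i, -, hi⟩ := Finset.mem_biUnion.1 hy
      exact ⟨i, Or.inl hi⟩
    · exact ⟨c y, Or.inr ⟨hy, rfl⟩⟩

theorem exists_strictMono_partition_extends {κ : Type*} [Finite κ] [Nonempty κ]
    (S : κ → Finset ℚ) (k : κ → ℚ → ℚ) (hk : ∀ i, StrictMonoOn (k i) (S i))
    (hdisj : Pairwise (Disjoint on fun i ↦ (S i).image (k i))) :
    ∃ H : κ → ℚ → ℚ, (∀ i, StrictMono (H i)) ∧ (∀ i, ∀ q ∈ S i, H i q = k i q) ∧
      Pairwise (Disjoint on fun i ↦ Set.range (H i)) ∧ ∀ y, ∃ i, y ∈ Set.range (H i) := by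
  obtain ⟨D, hD, hkD, hDdisj, hDcover⟩ := exists_dense_partition_superset _ hdisj
  choose H hH hrange hHk using fun i ↦ (hD i).exists_strictMono_range_eq_extends (S i) (k i)
    (hk i) fun s hs ↦ hkD i (by simpa using Finset.mem_image_of_mem (k i) hs)
  refine ⟨H, hH, hHk, ?_, ?_⟩ <;> simp only [hrange]
  exacts [hDdisj, hDcover]

end Rat

section Copies

variable {ι : Type*}

def FiberRel (r : ℚ → ℚ → Prop) (x y : ι × ℚ) : Prop := x.1 = y.1 ∧ r x.2 y.2

def fiberMap {κ α β : Type*} (σ : ι → κ) (H : ι → α → β) (x : ι × α) : κ × β :=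
  (σ x.1, H x.1 x.2)

theorem fiberRel_fiberMap {r : ℚ → ℚ → Prop} {σ : ι → ι} {H : ι → ℚ → ℚ}
    (hH : ∀ i q q', r q q' → r (H i q) (H i q')) {x y : ι × ℚ} (hxy : FiberRel r x y) :
    FiberRel r (fiberMap σ H x) (fiberMap σ H y) := by
  obtain ⟨i, q⟩ := x
  obtain ⟨j, q'⟩ := y
  obtain ⟨rfl : i = j, h⟩ := hxy
  exact ⟨rfl, hH i q q' h⟩

theorem surjective_fiberMap {κ α β : Type*} {σ : ι → κ} {H : ι → α → β}
    (h : ∀ m, ∃ i, σ i = m ∧ Surjective (H i)) : Surjective (fiberMap σ H) := by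
  rintro ⟨m, y⟩
  obtain ⟨i, rfl, hi⟩ := h m
  obtain ⟨q, rfl⟩ := hi y
  exact ⟨(i, q), rfl⟩

theorem bijective_fiberMap {κ α β : Type*} {σ : ι → κ} {H : ι → α → β}
    (hH : ∀ i, Injective (H i))
    (hdisj : ∀ i j, σ i = σ j → i ≠ j → Disjoint (Set.range (H i)) (Set.range (H j)))
    (hcover : ∀ m y, ∃ i, σ i = m ∧ y ∈ Set.range (H i)) :
    Bijective (fiberMap σ H) := by
  refine ⟨?_, ?_⟩
  · rintro ⟨i, q⟩ ⟨j, q'⟩ h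
    simp only [fiberMap, Prod.mk.injEq] at h
    obtain ⟨hσ, hH'⟩ := h
    by_cases hij : i = j
    · subst hij
      rw [hH i hH']
    · exact (Set.disjoint_left.1 (hdisj i j hσ hij) ⟨q, rfl⟩ ⟨q', hH'.symm⟩).elim
  · rintro ⟨m, y⟩
    obtain ⟨i, rfl, q, rfl⟩ := hcover m y
    exact ⟨(i, q), rfl⟩

theorem exists_eqOn_bijOn_compl [Infinite ι] (I T : Finset ι) (τ : ι → ι) :
    ∃ σ : ι → ι, Set.EqOn σ τ I ∧ Set.BijOn σ (↑I)ᶜ (↑T)ᶜ := by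
  classical
  obtain ⟨ρ⟩ : Nonempty (((↑I)ᶜ : Set ι) ≃ ((↑T)ᶜ : Set ι)) := Cardinal.eq.1 <| by
    rw [Cardinal.mk_compl_finset_of_infinite, Cardinal.mk_compl_finset_of_infinite]
  have hσ : ∀ i (hi : i ∉ I), (if hi : i ∈ I then τ i else ρ ⟨i, hi⟩) = ρ ⟨i, hi⟩ :=
    fun i hi ↦ dif_neg hi
  refine ⟨fun i ↦ if hi : i ∈ I then τ i else ρ ⟨i, hi⟩, fun i hi ↦ dif_pos hi, ?_, ?_, ?_⟩
  · intro i (hi : i ∉ I)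
    simpa only [hσ i hi] using (ρ ⟨i, hi⟩).2
  · intro i (hi : i ∉ I) j (hj : j ∉ I) hij
    simp only [hσ i hi, hσ j hj, Subtype.coe_inj, ρ.apply_eq_iff_eq] at hij
    exact congrArg Subtype.val hij
  · intro m hm
    refine ⟨ρ.symm ⟨m, hm⟩, (ρ.symm ⟨m, hm⟩).2, ?_⟩
    simp only [Subtype.coe_eta, Equiv.apply_symm_apply]
    exact dif_neg (ρ.symm ⟨m, hm⟩).2

end Copies

section Extension

variable {ι : Type*} {r : ℚ → ℚ → Prop} {A : Finset (ι × ℚ)} {f : ι × ℚ → ι × ℚ}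

noncomputable def slice (A : Finset (ι × ℚ)) (i : ι) : Finset ℚ :=
  A.preimage (Prod.mk i) (Prod.mk_right_injective i).injOn

@[simp]
theorem mem_slice {i : ι} {q : ℚ} : q ∈ slice A i ↔ (i, q) ∈ A :=
  Finset.mem_preimage

theorem exists_fst_apply_eq_of_fiberRel (htri : ∀ q q', r q q' ∨ q = q' ∨ r q' q)
    (hf : ∀ a ∈ A, ∀ b ∈ A, FiberRel r a b → FiberRel r (f a) (f b)) :
    ∃ τ : ι → ι, ∀ a ∈ A, (f a).1 = τ a.1 := by
  classical
  have hcopy : ∀ a ∈ A, ∀ b ∈ A, a.1 = b.1 → (f a).1 = (f b).1 := by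
    rintro ⟨i, q⟩ ha ⟨j, q'⟩ hb (rfl : i = j)
    rcases htri q q' with h | rfl | h
    exacts [(hf _ ha _ hb ⟨rfl, h⟩).1, rfl, (hf _ hb _ ha ⟨rfl, h⟩).1.symm]
  refine ⟨fun i ↦ if h : ∃ a ∈ A, a.1 = i then (f h.choose).1 else i, fun a ha ↦ ?_⟩
  have h : ∃ b ∈ A, b.1 = a.1 := ⟨a, ha, rfl⟩
  dsimp only
  rw [dif_pos h]
  exact hcopy a ha _ h.choose_spec.1 h.choose_spec.2.symm

theorem rel_snd_apply_of_mem_slice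
    (hf : ∀ a ∈ A, ∀ b ∈ A, FiberRel r a b → FiberRel r (f a) (f b)) (i : ι) :
    ∀ q ∈ slice A i, ∀ q' ∈ slice A i, r q q' → r (f (i, q)).2 (f (i, q')).2 :=
  fun _ hq _ hq' h ↦ (hf _ (mem_slice.1 hq) _ (mem_slice.1 hq') ⟨rfl, h⟩).2

theorem exists_surjective_fiberRel_extension [Infinite ι]
    (htri : ∀ q q', r q q' ∨ q = q' ∨ r q' q)
    (hext : ∀ (S : Finset ℚ) (k : ℚ → ℚ), (∀ q ∈ S, ∀ q' ∈ S, r q q' → r (k q) (k q')) →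
      ∃ h : ℚ → ℚ, (∀ q q', r q q' → r (h q) (h q')) ∧ ∀ q ∈ S, h q = k q)
    (hf : ∀ a ∈ A, ∀ b ∈ A, FiberRel r a b → FiberRel r (f a) (f b)) :
    ∃ g : ι × ℚ → ι × ℚ, Surjective g ∧ (∀ x y, FiberRel r x y → FiberRel r (g x) (g y)) ∧
      ∀ a ∈ A, g a = f a := by
  classical
  obtain ⟨τ, hτ⟩ := exists_fst_apply_eq_of_fiberRel htri hf
  set I := A.image Prod.fst
  obtain ⟨σ, hστ, hσ⟩ := exists_eqOn_bijOn_compl I ∅ τ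
  choose h hh hhk using fun i ↦ hext (slice A i) _ (rel_snd_apply_of_mem_slice hf i)
  -- the unused copies are mapped identically onto all copies, which gives surjectivity
  let H i := if i ∈ I then h i else id
  refine ⟨fiberMap σ H, surjective_fiberMap fun m ↦ ?_, fun x y ↦ fiberRel_fiberMap ?_, ?_⟩
  · obtain ⟨i, hi : i ∉ I, rfl⟩ := hσ.surjOn (by simp : m ∈ ((↑(∅ : Finset ι))ᶜ : Set ι))
    exact ⟨i, rfl, by simpa [H, hi] using surjective_id⟩
  · intro i q q' hqq'
    by_cases hi : i ∈ I <;> simp [H, hi, hh i q q' hqq', hqq']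
  · intro a ha
    have hi : a.1 ∈ I := Finset.mem_image_of_mem _ ha
    ext
    · simp [fiberMap, hστ hi, hτ a ha]
    · simp [fiberMap, H, hi, hhk a.1 a.2 (by simpa using ha)]

theorem finite_nonempty_preimage_singleton [DecidableEq ι] {I : Finset ι} {σ τ : ι → ι}
    (hστ : Set.EqOn σ τ I) (hσ : Set.BijOn σ (↑I)ᶜ (↑(I.image τ))ᶜ) (m : ι) :
    (σ ⁻¹' {m}).Finite ∧ (σ ⁻¹' {m}).Nonempty := by
  constructor
  · refine ((I.finite_toSet).union (Set.Subsingleton.finite (s := (↑I)ᶜ ∩ σ ⁻¹' {m})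
      fun i hi j hj ↦ hσ.injOn hi.1 hj.1 (hi.2.trans hj.2.symm))).subset fun i hi ↦ ?_
    by_cases h : i ∈ I
    exacts [Or.inl h, Or.inr ⟨h, hi⟩]
  · by_cases hm : m ∈ I.image τ
    · obtain ⟨i, hi, rfl⟩ := Finset.mem_image.1 hm
      exact ⟨i, hστ hi⟩
    · obtain ⟨i, -, hi⟩ := hσ.surjOn hm
      exact ⟨i, hi⟩

theorem disjoint_image_slice (hinj : Set.InjOn f A) {σ : ι → ι}
    (hσ : ∀ a ∈ A, (f a).1 = σ a.1) {i j : ι} (hσij : σ i = σ j) (hij : i ≠ j) :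
    Disjoint ((slice A i).image fun q ↦ (f (i, q)).2) ((slice A j).image fun q ↦ (f (j, q)).2) := by
  refine Finset.disjoint_left.2 fun y hyi hyj ↦ hij ?_
  obtain ⟨q, hq, rfl⟩ := Finset.mem_image.1 hyi
  obtain ⟨q', hq', hqq'⟩ := Finset.mem_image.1 hyj
  rw [mem_slice] at hq hq'
  have := hinj hq' hq (Prod.ext (by rw [hσ _ hq, hσ _ hq']; exact hσij.symm) hqq')
  exact (congrArg Prod.fst this).symm

theorem exists_bijective_fiberRel_lt_extension [Infinite ι] (hinj : Set.InjOn f A)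
    (hf : ∀ a ∈ A, ∀ b ∈ A, FiberRel (· < ·) a b → FiberRel (· < ·) (f a) (f b)) :
    ∃ g : ι × ℚ → ι × ℚ, Bijective g ∧
      (∀ x y, FiberRel (· < ·) x y → FiberRel (· < ·) (g x) (g y)) ∧ ∀ a ∈ A, g a = f a := by
  classical
  obtain ⟨τ, hτ⟩ := exists_fst_apply_eq_of_fiberRel lt_trichotomy hf
  set I := A.image Prod.fst
  obtain ⟨σ, hστ, hσ⟩ := exists_eqOn_bijOn_compl I (I.image τ) τ
  have hσf : ∀ a ∈ A, (f a).1 = σ a.1 := fun a ha ↦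
    (hτ a ha).trans (hστ (Finset.mem_image_of_mem _ ha)).symm
  -- in each copy `m`, the copies mapped to it share out `m` among themselves
  have hfiber : ∀ m, ∃ Hm : σ ⁻¹' {m} → ℚ → ℚ, (∀ i, StrictMono (Hm i)) ∧
      (∀ i : σ ⁻¹' {m}, ∀ q ∈ slice A i, Hm i q = (f (i, q)).2) ∧
      Pairwise (Disjoint on fun i ↦ Set.range (Hm i)) ∧ ∀ y, ∃ i, y ∈ Set.range (Hm i) := by
    intro m
    obtain ⟨hfin, hne⟩ := finite_nonempty_preimage_singleton hστ hσ m
    have := hfin.to_subtype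
    have := hne.to_subtype
    exact Rat.exists_strictMono_partition_extends _ _ (fun i ↦ rel_snd_apply_of_mem_slice hf i)
      fun i j hij ↦ disjoint_image_slice hinj hσf (i.2.trans j.2.symm) (Subtype.coe_ne_coe.2 hij)
  choose Hm hHm hHmk hHmdisj hHmcover using hfiber
  let H i := Hm (σ i) ⟨i, rfl⟩
  have hH : ∀ m (i : σ ⁻¹' {m}), H i = Hm m i := by
    rintro m ⟨i, rfl⟩
    rfl
  refine ⟨fiberMap σ H, bijective_fiberMap (fun i ↦ (hHm _ _).injective) ?_ ?_,
    fun x y ↦ fiberRel_fiberMap (H := H) fun i _ _ h ↦ hHm _ _ h, fun a ha ↦ ?_⟩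
  · intro i j hij hne
    rw [hH (σ j) ⟨i, hij⟩, hH (σ j) ⟨j, rfl⟩]
    exact hHmdisj (σ j) fun h ↦ hne (congrArg Subtype.val h)
  · intro m y
    obtain ⟨⟨i, hi⟩, hy⟩ := hHmcover m y
    exact ⟨i, hi, by rwa [hH m ⟨i, hi⟩]⟩
  · ext
    · simp [fiberMap, hσf a ha]
    · simp [fiberMap, H, hHmk _ ⟨a.1, rfl⟩ a.2 (by simpa using ha)]

end Extension

/-- `B_ω`, the countably infinite disjoint union `ℕ × ℚ` of copies of `(ℚ, <)`, is:
(a) MB-homogeneous: every injective `<`-preserving map between finite subsets extends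
to a bijective `<`-preserving map;
(b) HE-homogeneous: every `<`-preserving map between finite subsets extends to a
surjective `<`-preserving map;
(c) H̄Ē-homogeneous: every ≤-preserving map between finite subsets extends to a
surjective ≤-preserving map. -/
theorem Bomega_MB_HE_HbarEbar :
    (∀ (A : Finset (ℕ × ℚ)) (f : ℕ × ℚ → ℕ × ℚ), Set.InjOn f ↑A →
      (∀ a₁ ∈ A, ∀ a₂ ∈ A, Dlt a₁ a₂ → Dlt (f a₁) (f a₂)) →
      ∃ g : ℕ × ℚ → ℕ × ℚ, Function.Bijective g ∧
        (∀ x y, Dlt x y → Dlt (g x) (g y)) ∧ ∀ a ∈ A, g a = f a) ∧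
    (∀ (A : Finset (ℕ × ℚ)) (f : ℕ × ℚ → ℕ × ℚ),
      (∀ a₁ ∈ A, ∀ a₂ ∈ A, Dlt a₁ a₂ → Dlt (f a₁) (f a₂)) →
      ∃ g : ℕ × ℚ → ℕ × ℚ, Function.Surjective g ∧
        (∀ x y, Dlt x y → Dlt (g x) (g y)) ∧ ∀ a ∈ A, g a = f a) ∧
    (∀ (A : Finset (ℕ × ℚ)) (f : ℕ × ℚ → ℕ × ℚ),
      (∀ a₁ ∈ A, ∀ a₂ ∈ A, Dle a₁ a₂ → Dle (f a₁) (f a₂)) →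
      ∃ g : ℕ × ℚ → ℕ × ℚ, Function.Surjective g ∧
        (∀ x y, Dle x y → Dle (g x) (g y)) ∧ ∀ a ∈ A, g a = f a) := by
  refine ⟨fun A f hinj hf ↦ exists_bijective_fiberRel_lt_extension hinj hf,
    fun A f hf ↦ ?_, fun A f hf ↦ ?_⟩
  · refine exists_surjective_fiberRel_extension (r := (· < ·)) lt_trichotomy
      (fun S k hk ↦ ?_) hf
    obtain ⟨e, he⟩ := Order.exists_orderIso_extends_of_strictMonoOn S k hk
    exact ⟨e, fun q q' ↦ e.strictMono.lt_iff_lt.2, he⟩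
  · refine exists_surjective_fiberRel_extension (r := (· ≤ ·))
      (fun q q' ↦ (le_total q q').imp_right Or.inr) (fun S k hk ↦ ?_) hf
    obtain ⟨h, hh, hhk⟩ := S.exists_monotone_extends k hk
    exact ⟨h, fun q q' ↦ (hh ·), hhk⟩
end

section
/- Let T be a countable nontrivial tree: a partial order in which for every x the set {z | z < x} is a chain, whose comparability graph is connected (any two elements are joined by a finite path of pairwise comparable elements), and which contains an incomparable pair. Then the following are equivalent: (i) T is IĒ-homogeneous; (ii) T is H̄Ē-homogeneous (every ≤-preserving map between finite subsets of T extends to a surjective ≤-preserving map T → T); (iii) for every x ∈ T there is y ∈ T with x ∥ y. -/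
/-- A tree (semilinear order): a connected poset in which every set `{z | z < x}` is a
chain. Connectedness means the reflexive transitive closure of comparability relates
every pair of elements. -/
def IsTreePoset (T : Type*) [PartialOrder T] : Prop :=
  (∀ x : T, IsChain (· ≤ ·) {z : T | z < x}) ∧
    ∀ x y : T, Relation.ReflTransGen (fun a b : T => a ≤ b ∨ b ≤ a) x y

/-- `P` is H̄Ē-homogeneous: every ≤-preserving map between finite subsets extends to a
surjective ≤-preserving map `P → P`. -/
def HbarEbarHomogeneous (P : Type*) [PartialOrder P] : Prop :=
  ∀ (A : Finset P) (f : P → P), (∀ a₁ ∈ A, ∀ a₂ ∈ A, a₁ ≤ a₂ → f a₁ ≤ f a₂) →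
    ∃ g : P → P, Monotone g ∧ Function.Surjective g ∧ ∀ a ∈ A, g a = f a

/-!
If some `x` is comparable with every point while `a ∥ b`, the partial isomorphism `x ↦ a` has no
surjective monotone extension `g`: a preimage of `b` is comparable with `x`, so `b` is comparable
with `g x = a`.

Conversely, if every point has an incomparable partner, then so does every finite set (take a
partner of a common lower bound). To extend a monotone `f` on a finite set `A`, enumerate
`T = {t₀, t₁, …}`, pick a descending sequence `floor n ≤ t n` starting below `f '' A`, and points
`apex n` incomparable with `A`, with each other and with all earlier floors. The extension maps
the cone above `apex n` onto `t n`, a point above `A` to the image of the greatest element of `A`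
below it, and any other point `x` to `floor n` for the least `n` with `floor n ≤ x`.
-/

lemma IEbarHomogeneous.exists_incomp {P : Type*} [PartialOrder P] (hP : IEbarHomogeneous P)
    (hnt : ∃ a b : P, Incomp a b) (x : P) : ∃ y, Incomp x y := by
  obtain ⟨a, b, hab⟩ := hnt
  by_contra! hx
  have hcomp : ∀ y, x ≤ y ∨ y ≤ x := fun y => by
    by_contra! h
    exact hx y h
  have hiso : IsFinPartIso {x} (fun _ => a) := by simp [IsFinPartIso]
  obtain ⟨g, hg, hg_surj, hgx⟩ := hP {x} (fun _ => a) hiso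
  replace hgx : g x = a := hgx x (Finset.mem_singleton_self x)
  obtain ⟨w, rfl⟩ := hg_surj b
  rcases hcomp w with h | h
  · exact hab.1 (hgx ▸ hg h)
  · exact hab.2 (hgx ▸ hg h)

lemma HbarEbarHomogeneous.iEbarHomogeneous {P : Type*} [PartialOrder P]
    (hP : HbarEbarHomogeneous P) : IEbarHomogeneous P :=
  fun A f hf => hP A f fun a₁ h₁ a₂ h₂ => (hf a₁ h₁ a₂ h₂).1

lemma exists_antitone_forall_le {α : Type*} [Preorder α] [IsCodirectedOrder α] [Nonempty α]
    (t : ℕ → α) (B : Finset α) :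
    ∃ s : ℕ → α, Antitone s ∧ (∀ n, s n ≤ t n) ∧ ∀ b ∈ B, s 0 ≤ b := by
  classical
  choose w hw₁ hw₂ using fun (p : α × ℕ) => exists_le_le p.1 (t p.2)
  obtain ⟨w₀, hw₀⟩ : ∃ w₀, ∀ b ∈ insert (t 0) B, w₀ ≤ b := Finset.exists_le (α := αᵒᵈ) _
  refine ⟨fun n => Nat.rec w₀ (fun n sn => w (sn, n + 1)) n,
    antitone_nat_of_succ_le fun n => hw₁ _, fun n => ?_,
    fun b hb => hw₀ b (Finset.mem_insert_of_mem hb)⟩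
  cases n with
  | zero => exact hw₀ _ (Finset.mem_insert_self _ _)
  | succ n => exact hw₂ _

lemma exists_seq_incomp {P : Type*} [PartialOrder P]
    (h : ∀ S : Finset P, ∃ y, ∀ a ∈ S, Incomp y a) (A : Finset P) (s : ℕ → P) :
    ∃ c : ℕ → P, (∀ n, ∀ a ∈ A, Incomp (c n) a) ∧
      (∀ m n, m < n → Incomp (c n) (c m)) ∧ (∀ m n, m < n → Incomp (c n) (s m)) := by
  classical
  choose y hy using h
  let F : ℕ → Finset P := fun n => Nat.rec A (fun n Fn => insert (y Fn) (insert (s n) Fn)) n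
  have hF : Monotone F := monotone_nat_of_le_succ fun n =>
    (Finset.subset_insert _ _).trans (Finset.subset_insert _ _)
  refine ⟨fun n => y (F n), fun n a ha => hy _ a (hF n.zero_le ha),
    fun m n hmn => hy _ _ (hF hmn (Finset.mem_insert_self _ _)),
    fun m n hmn => hy _ _ (hF hmn (Finset.mem_insert_of_mem (Finset.mem_insert_self _ _)))⟩

namespace IsTreePoset

variable {T : Type*} [PartialOrder T]

lemma le_total_of_le_of_le (hT : IsTreePoset T) {a b z : T} (ha : a ≤ z) (hb : b ≤ z) :
    a ≤ b ∨ b ≤ a := by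
  rcases ha.eq_or_lt with rfl | ha
  · exact Or.inr hb
  rcases hb.eq_or_lt with rfl | hb
  · exact Or.inl ha.le
  rcases eq_or_ne a b with rfl | hne
  · exact Or.inl le_rfl
  exact hT.1 z ha hb hne

lemma isCodirectedOrder (hT : IsTreePoset T) : IsCodirectedOrder T where
  directed x y := by
    induction hT.2 x y with
    | refl => exact ⟨x, le_rfl, le_rfl⟩
    | tail _ hbc ih =>
      obtain ⟨w, hwx, hwb⟩ := ih
      rcases hbc with h | h
      · exact ⟨w, hwx, hwb.trans h⟩
      · rcases hT.le_total_of_le_of_le hwb h with h' | h'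
        · exact ⟨w, hwx, h'⟩
        · exact ⟨_, h'.trans hwx, le_rfl⟩

lemma exists_isGreatest_of_le (hT : IsTreePoset T) {A : Finset T} {x : T}
    (h : ∃ a ∈ A, a ≤ x) : ∃ m, IsGreatest {a | a ∈ A ∧ a ≤ x} m := by
  classical
  obtain ⟨a, ha, hax⟩ := h
  obtain ⟨m, hm⟩ := (A.filter (· ≤ x)).exists_maximal ⟨a, Finset.mem_filter.2 ⟨ha, hax⟩⟩
  simp only [Finset.mem_filter] at hm
  refine ⟨m, hm.1, fun b ⟨hb, hbx⟩ => ?_⟩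
  exact (hT.le_total_of_le_of_le hbx hm.1.2).elim id (hm.2 ⟨hb, hbx⟩)

lemma exists_forall_incomp (hT : IsTreePoset T) [Nonempty T]
    (hincomp : ∀ x : T, ∃ y, Incomp x y) (S : Finset T) : ∃ y, ∀ a ∈ S, Incomp y a := by
  have := hT.isCodirectedOrder
  obtain ⟨w, hw⟩ : ∃ w, ∀ a ∈ S, w ≤ a := Finset.exists_le (α := Tᵒᵈ) S
  obtain ⟨y, hwy, hyw⟩ := hincomp w
  refine ⟨y, fun a ha => ⟨fun hya => ?_, fun hay => hwy ((hw a ha).trans hay)⟩⟩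
  exact (hT.le_total_of_le_of_le hya (hw a ha)).elim hyw hwy

end IsTreePoset

structure ExtensionData {T : Type*} [PartialOrder T] (A : Finset T) (f : T → T) where
  enum : ℕ → T
  surjective_enum : Function.Surjective enum
  floor : ℕ → T
  antitone_floor : Antitone floor
  floor_le_enum : ∀ n, floor n ≤ enum n
  floor_zero_le : ∀ a ∈ A, floor 0 ≤ f a
  apex : ℕ → T
  incomp_apex_mem : ∀ n, ∀ a ∈ A, Incomp (apex n) a
  incomp_apex_apex : ∀ m n, m < n → Incomp (apex n) (apex m)
  incomp_apex_floor : ∀ m n, m < n → Incomp (apex n) (floor m)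

namespace ExtensionData

variable {T : Type*} [PartialOrder T] {A : Finset T} {f : T → T} (D : ExtensionData A f)

lemma exists_floor_le (x : T) : ∃ n, D.floor n ≤ x := by
  obtain ⟨n, rfl⟩ := D.surjective_enum x
  exact ⟨n, D.floor_le_enum n⟩

open Classical in
noncomputable def floorIndex (x : T) : ℕ := Nat.find (D.exists_floor_le x)

lemma floor_floorIndex_le (x : T) : D.floor (D.floorIndex x) ≤ x :=
  open Classical in Nat.find_spec (D.exists_floor_le x)

lemma floorIndex_le {x : T} {n : ℕ} (h : D.floor n ≤ x) : D.floorIndex x ≤ n :=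
  open Classical in Nat.find_min' _ h

lemma antitone_floorIndex : Antitone D.floorIndex := fun x _ h =>
  D.floorIndex_le ((D.floor_floorIndex_le x).trans h)

open Classical in
noncomputable def extend (x : T) : T :=
  if h : ∃ n, D.apex n ≤ x then D.enum h.choose
  else if h' : ∃ m, IsGreatest {a | a ∈ A ∧ a ≤ x} m then f h'.choose
  else D.floor (D.floorIndex x)

lemma eq_of_apex_le_apex {m n : ℕ} (h : D.apex m ≤ D.apex n) : m = n := by
  rcases lt_trichotomy m n with hmn | rfl | hnm
  · exact absurd h (D.incomp_apex_apex m n hmn).2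
  · rfl
  · exact absurd h (D.incomp_apex_apex n m hnm).1

lemma eq_of_apex_le_of_apex_le (hT : IsTreePoset T) {m n : ℕ} {y : T} (hm : D.apex m ≤ y)
    (hn : D.apex n ≤ y) : m = n := by
  rcases hT.le_total_of_le_of_le hm hn with h | h
  · exact D.eq_of_apex_le_apex h
  · exact (D.eq_of_apex_le_apex h).symm

lemma extend_of_apex_le (hT : IsTreePoset T) {n : ℕ} {x : T} (h : D.apex n ≤ x) :
    D.extend x = D.enum n := by
  have hx : ∃ n, D.apex n ≤ x := ⟨n, h⟩
  rw [extend, dif_pos hx, D.eq_of_apex_le_of_apex_le hT hx.choose_spec h]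

lemma extend_of_isGreatest {x m : T} (hx : ¬∃ n, D.apex n ≤ x)
    (hm : IsGreatest {a | a ∈ A ∧ a ≤ x} m) : D.extend x = f m := by
  have hex : ∃ m, IsGreatest {a | a ∈ A ∧ a ≤ x} m := ⟨m, hm⟩
  rw [extend, dif_neg hx, dif_pos hex, hex.choose_spec.unique hm]

lemma extend_of_forall_not_le {x : T} (hx : ¬∃ n, D.apex n ≤ x) (hA : ∀ a ∈ A, ¬a ≤ x) :
    D.extend x = D.floor (D.floorIndex x) := by
  have hex : ¬∃ m, IsGreatest {a | a ∈ A ∧ a ≤ x} m := fun ⟨_, hm, _⟩ => hA _ hm.1 hm.2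
  rw [extend, dif_neg hx, dif_neg hex]

lemma extend_eq_of_mem {a : T} (ha : a ∈ A) : D.extend a = f a :=
  D.extend_of_isGreatest (fun ⟨n, h⟩ => (D.incomp_apex_mem n a ha).1 h)
    ⟨⟨ha, le_rfl⟩, fun _ h => h.2⟩

lemma surjective_extend (hT : IsTreePoset T) : Function.Surjective D.extend := fun y => by
  obtain ⟨n, rfl⟩ := D.surjective_enum y
  exact ⟨D.apex n, D.extend_of_apex_le hT le_rfl⟩

/-- This glues the cone above `apex n` monotonically to the points below it; it is why `apex n`
is chosen incomparable with the earlier floors. -/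
lemma extend_le_floor_of_le_apex {x : T} {n : ℕ} (hx : ¬∃ m, D.apex m ≤ x) (hxn : x ≤ D.apex n) :
    D.extend x ≤ D.floor n := by
  rw [D.extend_of_forall_not_le hx fun a ha hax => (D.incomp_apex_mem n a ha).2 (hax.trans hxn)]
  refine D.antitone_floor (not_lt.1 fun hlt => ?_)
  exact (D.incomp_apex_floor _ n hlt).2 ((D.floor_floorIndex_le x).trans hxn)

lemma extend_le_extend_of_not_apex_le (hT : IsTreePoset T)
    (hf : ∀ a₁ ∈ A, ∀ a₂ ∈ A, a₁ ≤ a₂ → f a₁ ≤ f a₂) {x y : T} (hy : ¬∃ n, D.apex n ≤ y)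
    (hxy : x ≤ y) : D.extend x ≤ D.extend y := by
  have hx : ¬∃ n, D.apex n ≤ x := fun ⟨n, h⟩ => hy ⟨n, h.trans hxy⟩
  by_cases hAy : ∃ a ∈ A, a ≤ y
  · obtain ⟨my, hmy⟩ := hT.exists_isGreatest_of_le hAy
    rw [D.extend_of_isGreatest hy hmy]
    by_cases hAx : ∃ a ∈ A, a ≤ x
    · obtain ⟨mx, hmx⟩ := hT.exists_isGreatest_of_le hAx
      rw [D.extend_of_isGreatest hx hmx]
      exact hf _ hmx.1.1 _ hmy.1.1 (hmy.2 ⟨hmx.1.1, hmx.1.2.trans hxy⟩)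
    · push Not at hAx
      rw [D.extend_of_forall_not_le hx hAx]
      exact (D.antitone_floor (Nat.zero_le _)).trans (D.floor_zero_le _ hmy.1.1)
  · push Not at hAy
    have hAx : ∀ a ∈ A, ¬a ≤ x := fun a ha h => hAy a ha (h.trans hxy)
    rw [D.extend_of_forall_not_le hx hAx, D.extend_of_forall_not_le hy hAy]
    exact D.antitone_floor (D.antitone_floorIndex hxy)

lemma monotone_extend (hT : IsTreePoset T) (hf : ∀ a₁ ∈ A, ∀ a₂ ∈ A, a₁ ≤ a₂ → f a₁ ≤ f a₂) :
    Monotone D.extend := by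
  intro x y hxy
  by_cases hy : ∃ n, D.apex n ≤ y
  · obtain ⟨n, hn⟩ := hy
    rw [D.extend_of_apex_le hT hn]
    by_cases hx : ∃ m, D.apex m ≤ x
    · obtain ⟨m, hm⟩ := hx
      rw [D.extend_of_apex_le hT hm, D.eq_of_apex_le_of_apex_le hT (hm.trans hxy) hn]
    · have hxn : x ≤ D.apex n :=
        (hT.le_total_of_le_of_le hxy hn).resolve_right fun h => hx ⟨n, h⟩
      exact (D.extend_le_floor_of_le_apex hx hxn).trans (D.floor_le_enum n)
  · exact D.extend_le_extend_of_not_apex_le hT hf hy hxy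

end ExtensionData

namespace IsTreePoset

variable {T : Type*} [PartialOrder T] [Countable T] [Nonempty T]

lemma nonempty_extensionData (hT : IsTreePoset T) (hincomp : ∀ x : T, ∃ y, Incomp x y)
    (A : Finset T) (f : T → T) : Nonempty (ExtensionData A f) := by
  classical
  have := hT.isCodirectedOrder
  obtain ⟨t, ht⟩ := exists_surjective_nat T
  obtain ⟨s, hs_anti, hs_le, hs_zero⟩ := exists_antitone_forall_le t (A.image f)
  obtain ⟨c, hcA, hcc, hcs⟩ := exists_seq_incomp (hT.exists_forall_incomp hincomp) A s
  exact ⟨⟨t, ht, s, hs_anti, hs_le, fun a ha => hs_zero _ (Finset.mem_image_of_mem f ha),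
    c, hcA, hcc, hcs⟩⟩

lemma hbarEbarHomogeneous (hT : IsTreePoset T) (hincomp : ∀ x : T, ∃ y, Incomp x y) :
    HbarEbarHomogeneous T := fun A f hf =>
  let D := (hT.nonempty_extensionData hincomp A f).some
  ⟨D.extend, D.monotone_extend hT hf, D.surjective_extend hT, fun _ => D.extend_eq_of_mem⟩

end IsTreePoset

/-- For a countable nontrivial tree `T`: IĒ-homogeneity, H̄Ē-homogeneity, and the
property that every point has an incomparable point, are all equivalent. -/
theorem tree_IEbar_iff_HbarEbar_iff_incomp {T : Type*} [PartialOrder T] [Countable T]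
    (hT : IsTreePoset T) (hnt : ∃ x y : T, Incomp x y) :
    (IEbarHomogeneous T ↔ HbarEbarHomogeneous T) ∧
      (IEbarHomogeneous T ↔ ∀ x : T, ∃ y : T, Incomp x y) := by
  have : Nonempty T := hnt.nonempty
  have hIE_incomp : IEbarHomogeneous T → ∀ x : T, ∃ y, Incomp x y := fun h => h.exists_incomp hnt
  exact ⟨⟨fun h => hT.hbarEbarHomogeneous (hIE_incomp h), HbarEbarHomogeneous.iEbarHomogeneous⟩,
    ⟨hIE_incomp, fun h => (hT.hbarEbarHomogeneous h).iEbarHomogeneous⟩⟩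
end

section
/- Let P be a countable partial order which is IĒ-homogeneous, and let n ≥ 1 be a natural number such that every antichain in P has at most n elements and some antichain in P has exactly n elements. Then every x ∈ P belongs to an antichain with exactly n elements. -/
open Function

theorem IsAntichain.image_of_leftInverse {α β : Type*} [Preorder α] [Preorder β]
    {g : α → β} {h : β → α} (hg : Monotone g) (hgh : LeftInverse g h) {s : Set β}
    (hs : IsAntichain (· ≤ ·) s) : IsAntichain (· ≤ ·) (h '' s) :=
  hs.image h fun a b hab => by simpa only [hgh a, hgh b] using hg hab

theorem Function.Surjective.exists_leftInverse_apply_eq {α β : Type*} {g : α → β}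
    (hg : Surjective g) {x : α} {s : β} (hx : g x = s) :
    ∃ h : β → α, LeftInverse g h ∧ h s = x := by
  classical
  refine ⟨update (surjInv hg) s x, fun b => ?_, update_self s x (surjInv hg)⟩
  rcases eq_or_ne b s with rfl | hb
  · rw [update_self, hx]
  · rw [update_of_ne hb, surjInv_eq hg]

theorem IEbarHomogeneous.exists_monotone_surjective_apply_eq {P : Type*} [PartialOrder P]
    (hIE : IEbarHomogeneous P) (x y : P) :
    ∃ g : P → P, Monotone g ∧ Surjective g ∧ g x = y := by
  have hiso : IsFinPartIso {x} (fun _ => y) := by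
    simp only [IsFinPartIso, Finset.mem_singleton]
    rintro _ rfl _ rfl
    simp only [le_refl]
  obtain ⟨g, hmono, hsurj, hgx⟩ := hIE {x} _ hiso
  exact ⟨g, hmono, hsurj, hgx x (Finset.mem_singleton_self x)⟩

theorem IEbar_antichain_max_general (P : Type*) [PartialOrder P]
    (hIE : IEbarHomogeneous P) (n : ℕ) (hn : 1 ≤ n)
    (hex : ∃ S : Finset P, IsAntichain (· ≤ ·) (S : Set P) ∧ S.card = n) :
    ∀ x : P, ∃ S : Finset P, IsAntichain (· ≤ ·) (S : Set P) ∧ S.card = n ∧ x ∈ S := by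
  classical
  intro x
  obtain ⟨S, hS, rfl⟩ := hex
  obtain ⟨s, hs⟩ := Finset.card_pos.mp hn
  obtain ⟨g, hmono, hsurj, hgx⟩ := hIE.exists_monotone_surjective_apply_eq x s
  obtain ⟨h, hgh, hhs⟩ := hsurj.exists_leftInverse_apply_eq hgx
  refine ⟨S.image h, ?_, Finset.card_image_of_injective S hgh.injective, ?_⟩
  · rw [Finset.coe_image]
    exact hS.image_of_leftInverse hmono hgh
  · exact Finset.mem_image.mpr ⟨s, hs, hhs⟩

/-- If `P` is a countable IĒ-homogeneous poset whose antichains have maximum size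
`n ≥ 1`, then every element of `P` lies in an antichain of size `n`. -/
theorem IEbar_antichain_max (P : Type*) [PartialOrder P] [Countable P]
    (hIE : IEbarHomogeneous P) (n : ℕ) (hn : 1 ≤ n)
    (hmax : ∀ S : Finset P, IsAntichain (· ≤ ·) (S : Set P) → S.card ≤ n)
    (hex : ∃ S : Finset P, IsAntichain (· ≤ ·) (S : Set P) ∧ S.card = n) :
    ∀ x : P, ∃ S : Finset P, IsAntichain (· ≤ ·) (S : Set P) ∧ S.card = n ∧ x ∈ S :=
  IEbar_antichain_max_general P hIE n hn hex
end

section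
/- Let P be a countable partial order which is IĒ-homogeneous, which embeds V (there exist a, b, c ∈ P with c < a, c < b and a ∥ b) and Λ (there exist a, b, c ∈ P with a < c, b < c and a ∥ b), but which does not embed Z (there do not exist a, b, c ∈ P with a < b, c ∥ a and c ∥ b). Then P is a chain of antichains C_n: there exists a nonempty countable type A such that P is order-isomorphic to ℚ × A with the order (q, a) ≤ (r, b) iff q < r or (q = r and a = b). -/
/-!
A poset omits `Z` exactly when `a < c → a < b ∨ b < c`, i.e. when `<` is a strict weak order;
its classes under "equal or incomparable" are the antichains `C_n`, linearly ordered by `<`.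
If moreover every element has an incomparable partner (homogeneity spreads the one pair that
`V` provides), a monotone surjection `g` is strictly monotone: a preimage `z` of a partner of
`g s` is incomparable to `s`, hence lies below every `c > s`, and so `g c` dominates two
incomparable elements. IĒ-homogeneity therefore supplies strictly monotone surjections sending
any point to any point and any pair `s < t` to any pair `u < v`. This makes the chain of
antichains dense without endpoints, hence isomorphic to `ℚ` (Cantor), and the right inverses of
these surjections inject any antichain into any other (Schröder–Bernstein).
-/

open Function

section

variable {P Q : Type*} [PartialOrder P] [PartialOrder Q]

theorem Incomp.symm {x y : P} (h : Incomp x y) : Incomp y x := ⟨h.2, h.1⟩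

theorem Incomp.of_monotone {g : P → Q} (hg : Monotone g) {x y : P} (h : Incomp (g x) (g y)) :
    Incomp x y :=
  ⟨fun hxy => h.1 (hg hxy), fun hyx => h.2 (hg hyx)⟩

theorem isOrderConnected_of_not_embeds_Z (hZ : ¬ ∃ a b c : P, a < b ∧ Incomp c a ∧ Incomp c b) :
    IsOrderConnected P (· < ·) where
  conn a b c hac := by
    by_contra! h
    exact hZ ⟨a, c, b, hac, ⟨fun _ => by order, fun _ => by order⟩,
      ⟨fun _ => by order, fun _ => by order⟩⟩

variable [IsOrderConnected P (· < ·)]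

theorem lt_of_lt_of_incomp {s c z : P} (hsc : s < c) (hzs : Incomp z s) : z < c :=
  (IsOrderConnected.conn s z c hsc).resolve_left fun hsz => hzs.2 hsz.le

theorem Monotone.strictMono_of_surjective (hinc : ∀ x : P, ∃ y, Incomp x y) {g : P → P}
    (hg : Monotone g) (hsurj : Surjective g) : StrictMono g := by
  intro s c hsc
  obtain ⟨u, hpartner⟩ := hinc (g s)
  obtain ⟨z, rfl⟩ := hsurj u
  have hzc : z < c := lt_of_lt_of_incomp hsc (hpartner.of_monotone hg).symm
  exact (hg hsc.le).lt_of_ne fun hsc' => hpartner.2 (hsc' ▸ hg hzc.le)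

theorem lt_of_lt_of_incompRel {x₁ x₂ y₁ y₂ : P} (h : x₁ < y₁) (hx : IncompRel (· < ·) x₁ x₂)
    (hy : IncompRel (· < ·) y₁ y₂) : x₂ < y₂ :=
  (IsOrderConnected.conn x₂ y₂ y₁ <|
    (IsOrderConnected.conn x₁ x₂ y₁ h).resolve_left hx.1).resolve_right hy.2

end

section

variable (P : Type*) [PartialOrder P] [IsOrderConnected P (· < ·)]

-- `IncompRel (· < ·) x y` holds iff `x = y` or `Incomp x y`.
def Levels.setoid : Setoid P where
  r := IncompRel (· < ·)
  iseqv := ⟨IncompRel.refl _, IncompRel.symm, fun h₁ h₂ =>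
    ⟨IsOrderConnected.neg_trans h₁.1 h₂.1, IsOrderConnected.neg_trans h₂.2 h₁.2⟩⟩

def Levels : Type _ := Quotient (Levels.setoid P)

namespace Levels

variable {P}

def mk : P → Levels P := Quotient.mk _

theorem mk_surjective : Surjective (mk : P → Levels P) := Quotient.mk_surjective

theorem mk_eq_mk {x y : P} : mk x = mk y ↔ IncompRel (· < ·) x y := Quotient.eq

protected def lt : Levels P → Levels P → Prop :=
  Quotient.lift₂ (· < ·) fun _ _ _ _ hx hy =>
    propext ⟨fun h => lt_of_lt_of_incompRel h hx hy, fun h => lt_of_lt_of_incompRel h hx.symm hy.symm⟩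

instance : IsStrictTotalOrder (Levels P) Levels.lt where
  irrefl q := Quotient.inductionOn q lt_irrefl
  trans q₁ q₂ q₃ := Quotient.inductionOn₃ q₁ q₂ q₃ fun _ _ _ => lt_trans
  trichotomous q₁ q₂ := Quotient.inductionOn₂ q₁ q₂ fun _ _ hxy hyx => Quotient.sound ⟨hxy, hyx⟩

noncomputable instance : LinearOrder (Levels P) :=
  @linearOrderOfSTO _ Levels.lt _ (Classical.decRel _)

theorem mk_lt_mk {x y : P} : mk x < mk y ↔ x < y := Iff.rfl

instance [Countable P] : Countable (Levels P) := Quotient.countable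

instance [Nonempty P] : Nonempty (Levels P) := .map mk ‹_›

instance [NoMaxOrder P] : NoMaxOrder (Levels P) where
  exists_gt q := by
    obtain ⟨x, rfl⟩ := mk_surjective q
    obtain ⟨y, hxy⟩ := exists_gt x
    exact ⟨mk y, mk_lt_mk.2 hxy⟩

instance [NoMinOrder P] : NoMinOrder (Levels P) where
  exists_lt q := by
    obtain ⟨x, rfl⟩ := mk_surjective q
    obtain ⟨y, hyx⟩ := exists_lt x
    exact ⟨mk y, mk_lt_mk.2 hyx⟩

instance [DenselyOrdered P] : DenselyOrdered (Levels P) where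
  dense q₁ q₂ := by
    obtain ⟨x, rfl⟩ := mk_surjective q₁
    obtain ⟨y, rfl⟩ := mk_surjective q₂
    intro hxy
    obtain ⟨z, hxz, hzy⟩ := exists_between (mk_lt_mk.1 hxy)
    exact ⟨mk z, mk_lt_mk.2 hxz, mk_lt_mk.2 hzy⟩

end Levels

end

namespace IEbarHomogeneous

variable {P : Type*} [PartialOrder P]

theorem exists_apply_eq (hIE : IEbarHomogeneous P) (x y : P) :
    ∃ g : P → P, Monotone g ∧ Surjective g ∧ g x = y := by
  obtain ⟨g, hg, hsurj, hgx⟩ := hIE {x} (fun _ => y) (by simp [IsFinPartIso])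
  exact ⟨g, hg, hsurj, hgx x (Finset.mem_singleton_self x)⟩

theorem exists_apply_eq_apply_eq (hIE : IEbarHomogeneous P) {s t u v : P} (hst : s < t)
    (huv : u < v) : ∃ g : P → P, Monotone g ∧ Surjective g ∧ g s = u ∧ g t = v := by
  classical
  have hiso : IsFinPartIso {s, t} (fun w => if w = s then u else v) := by
    simp [IsFinPartIso, hst.ne', hst.le, huv.le, hst.not_ge, huv.not_ge]
  obtain ⟨g, hg, hsurj, hgA⟩ := hIE {s, t} _ hiso
  refine ⟨g, hg, hsurj, ?_, ?_⟩
  · simpa using hgA s (by simp)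
  · simpa [hst.ne'] using hgA t (by simp)

theorem exists_incomp_s13 (hIE : IEbarHomogeneous P) {a b : P} (hab : Incomp a b) (x : P) :
    ∃ y, Incomp x y := by
  obtain ⟨g, hg, hsurj, hgx⟩ := hIE.exists_apply_eq x a
  obtain ⟨y, hgy⟩ := hsurj b
  exact ⟨y, Incomp.of_monotone hg (hgx ▸ hgy ▸ hab)⟩

variable [IsOrderConnected P (· < ·)]

theorem noMaxOrder (hIE : IEbarHomogeneous P) (hinc : ∀ x : P, ∃ y, Incomp x y) {c a : P}
    (hca : c < a) : NoMaxOrder P where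
  exists_gt x := by
    rcases IsOrderConnected.conn c x a hca with hcx | hxa
    · obtain ⟨g, hg, hsurj, rfl⟩ := hIE.exists_apply_eq c x
      exact ⟨g (g c), hg.strictMono_of_surjective hinc hsurj hcx⟩
    · exact ⟨a, hxa⟩

theorem noMinOrder (hIE : IEbarHomogeneous P) (hinc : ∀ x : P, ∃ y, Incomp x y) {c a : P}
    (hca : c < a) : NoMinOrder P where
  exists_lt x := by
    rcases IsOrderConnected.conn c x a hca with hcx | hxa
    · exact ⟨c, hcx⟩
    · obtain ⟨g, hg, hsurj, rfl⟩ := hIE.exists_apply_eq a x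
      exact ⟨g (g a), hg.strictMono_of_surjective hinc hsurj hxa⟩

theorem denselyOrdered [NoMinOrder P] [NoMaxOrder P] (hIE : IEbarHomogeneous P)
    (hinc : ∀ x : P, ∃ y, Incomp x y) : DenselyOrdered P where
  dense u v huv := by
    obtain ⟨s, hsu⟩ := exists_lt u
    obtain ⟨t, hvt⟩ := exists_gt v
    obtain ⟨g, hg, hsurj, hgs, hgt⟩ :=
      hIE.exists_apply_eq_apply_eq (hsu.trans (huv.trans hvt)) huv
    have hg' := hg.strictMono_of_surjective hinc hsurj
    exact ⟨g u, hgs.symm.trans_lt (hg' hsu), (hg' (huv.trans hvt)).trans_eq hgt⟩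

theorem nonempty_equiv_levels_fiber (hIE : IEbarHomogeneous P)
    (hinc : ∀ x : P, ∃ y, Incomp x y) (q q' : Levels P) :
    Nonempty ({x // Levels.mk x = q} ≃ {x // Levels.mk x = q'}) := by
  suffices ∀ q q' : Levels P, Nonempty ({x // Levels.mk x = q} ↪ {x // Levels.mk x = q'}) from
    Embedding.antisymm (this q q').some (this q' q).some
  intro q q'
  obtain ⟨x, rfl⟩ := Levels.mk_surjective q
  obtain ⟨y, rfl⟩ := Levels.mk_surjective q'
  obtain ⟨g, hg, hsurj, hgy⟩ := hIE.exists_apply_eq y x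
  have hg' := hg.strictMono_of_surjective hinc hsurj
  refine ⟨⟨fun z => ⟨surjInv hsurj z, ?_⟩, fun z₁ z₂ h => Subtype.ext (injective_surjInv hsurj
    (congrArg Subtype.val h))⟩⟩
  have hz : IncompRel (· < ·) (g (surjInv hsurj z)) (g y) := by
    rw [surjInv_eq hsurj, hgy, ← Levels.mk_eq_mk]
    exact z.2
  exact Levels.mk_eq_mk.2 ⟨fun h => hz.1 (hg' h), fun h => hz.2 (hg' h)⟩

end IEbarHomogeneous

theorem IEbar_V_Lambda_notZ_chain_of_antichains_general (P : Type*) [PartialOrder P] [Countable P]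
    (hIE : IEbarHomogeneous P)
    (hV : ∃ a b c : P, c < a ∧ c < b ∧ Incomp a b)
    (hZ : ¬ ∃ a b c : P, a < b ∧ Incomp c a ∧ Incomp c b) :
    ∃ (A : Type) (_ : Countable A) (_ : Nonempty A) (e : P ≃ ℚ × A),
      ∀ x y : P, x ≤ y ↔ ((e x).1 < (e y).1 ∨ e x = e y) := by
  obtain ⟨a, b, c, hca, -, hab⟩ := hV
  have : IsOrderConnected P (· < ·) := isOrderConnected_of_not_embeds_Z hZ
  have hinc := hIE.exists_incomp_s13 hab
  have : NoMaxOrder P := hIE.noMaxOrder hinc hca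
  have : NoMinOrder P := hIE.noMinOrder hinc hca
  have : DenselyOrdered P := hIE.denselyOrdered hinc
  have : Nonempty P := ⟨c⟩
  obtain ⟨φ⟩ := Order.iso_of_countable_dense (Levels P) ℚ
  let A := Shrink.{0} {x // Levels.mk x = Levels.mk c}
  have fiberEquiv (q : Levels P) : {x // Levels.mk x = q} ≃ A :=
    (hIE.nonempty_equiv_levels_fiber hinc q _).some.trans (equivShrink _)
  let e : P ≃ ℚ × A := (Equiv.sigmaFiberEquiv Levels.mk).symm.trans
    ((Equiv.sigmaEquivProdOfEquiv fiberEquiv).trans (φ.toEquiv.prodCongr (Equiv.refl A)))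
  refine ⟨A, .of_equiv _ (equivShrink _), ⟨equivShrink _ ⟨c, rfl⟩⟩, e, fun x y => ?_⟩
  change x ≤ y ↔ φ (Levels.mk x) < φ (Levels.mk y) ∨ e x = e y
  rw [le_iff_lt_or_eq, φ.lt_iff_lt, Levels.mk_lt_mk, e.injective.eq_iff]

/-- A countable IĒ-homogeneous poset embedding `V` and `Λ` but not `Z` is a chain of
antichains `C_n`: it is order-isomorphic to `ℚ × A` for some nonempty countable `A`,
where `(q, a) ≤ (r, b)` iff `q < r` or `(q, a) = (r, b)`. -/
theorem IEbar_V_Lambda_notZ_chain_of_antichains (P : Type*) [PartialOrder P] [Countable P]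
    (hIE : IEbarHomogeneous P)
    (hV : ∃ a b c : P, c < a ∧ c < b ∧ Incomp a b)
    (hL : ∃ a b c : P, a < c ∧ b < c ∧ Incomp a b)
    (hZ : ¬ ∃ a b c : P, a < b ∧ Incomp c a ∧ Incomp c b) :
    ∃ (A : Type) (_ : Countable A) (_ : Nonempty A) (e : P ≃ ℚ × A),
      ∀ x y : P, x ≤ y ↔ ((e x).1 < (e y).1 ∨ e x = e y) :=
  IEbar_V_Lambda_notZ_chain_of_antichains_general P hIE hV hZ
end

section
/- Let P be a countable partial order which is IH̄-homogeneous (every finite partial isomorphism of P extends to a ≤-preserving map P → P) and which satisfies the incomparable point property: for every finite subset A of P there is z ∈ P with z ∥ a for all a ∈ A. Then P is H̄Ē-homogeneous: every ≤-preserving map between finite subsets of P extends to a surjective ≤-preserving map P → P. -/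
/-- `P` is IH̄-homogeneous: every finite partial isomorphism extends to a
≤-preserving map `P → P`. -/
def IHbarHomogeneous (P : Type*) [PartialOrder P] : Prop :=
  ∀ (A : Finset P) (f : P → P), IsFinPartIso A f →
    ∃ g : P → P, Monotone g ∧ ∀ a ∈ A, g a = f a

open Function

lemma Finset.exists_subset_cofinal_values {α β : Type*} [Preorder β] (h : α → β) (D : Finset α) :
    ∃ S ⊆ D, (∀ b ∈ D, ∃ d ∈ S, h b ≤ h d) ∧ ∀ d₁ ∈ S, ∀ d₂ ∈ S, h d₁ ≤ h d₂ → d₁ = d₂ := by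
  classical
  let Covers (S : Finset α) : Prop := S ⊆ D ∧ ∀ b ∈ D, ∃ d ∈ S, h b ≤ h d
  obtain ⟨S, ⟨hSD, hcov⟩, hmin⟩ :=
    exists_minimal_of_wellFoundedLT Covers ⟨D, subset_rfl, fun b hb => ⟨b, hb, le_rfl⟩⟩
  refine ⟨S, hSD, hcov, fun d₁ hd₁ d₂ hd₂ hle => by_contra fun hne => ?_⟩
  -- a minimal `S` has no such pair: whatever `d₁` dominates, `d₂` dominates too
  have hcov' : Covers (S.erase d₁) := by
    refine ⟨(S.erase_subset d₁).trans hSD, fun b hb => ?_⟩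
    obtain ⟨d, hd, hbd⟩ := hcov b hb
    by_cases hdd₁ : d = d₁
    · exact ⟨d₂, Finset.mem_erase.2 ⟨Ne.symm hne, hd₂⟩, hbd.trans (hdd₁ ▸ hle)⟩
    · exact ⟨d, Finset.mem_erase.2 ⟨hdd₁, hd⟩, hbd⟩
  exact Finset.notMem_erase d₁ S (hmin hcov' (S.erase_subset d₁) hd₁)

lemma Finset.exists_subset_coinitial_values {α β : Type*} [Preorder β] (h : α → β)
    (D : Finset α) :
    ∃ S ⊆ D, (∀ b ∈ D, ∃ d ∈ S, h d ≤ h b) ∧ ∀ d₁ ∈ S, ∀ d₂ ∈ S, h d₁ ≤ h d₂ → d₁ = d₂ := by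
  obtain ⟨S, hSD, hcov, hinj⟩ := D.exists_subset_cofinal_values (OrderDual.toDual ∘ h)
  exact ⟨S, hSD, hcov, fun d₁ hd₁ d₂ hd₂ hle => (hinj d₂ hd₂ d₁ hd₁ hle).symm⟩

section

variable {P : Type*} [PartialOrder P]

lemma IHbarHomogeneous.exists_between (hIH : IHbarHomogeneous P) {B : Finset P} {h : P → P}
    (hh : MonotoneOn h B) (p : P) :
    ∃ v, (∀ b ∈ B, b ≤ p → h b ≤ v) ∧ ∀ b ∈ B, p ≤ b → v ≤ h b := by
  classical
  by_cases hcross : ∃ d ∈ B, ∃ u ∈ B, d ≤ p ∧ p ≤ u ∧ h d = h u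
  · obtain ⟨d, hd, u, hu, hdp, hpu, hdu⟩ := hcross
    exact ⟨h d, fun b hb hbp => hdu ▸ hh hb hu (hbp.trans hpu),
      fun b hb hpb => hh hd hb (hdp.trans hpb)⟩
  push Not at hcross
  obtain ⟨L, hLB, hLcov, hLinj⟩ := (B.filter (· ≤ p)).exists_subset_cofinal_values h
  obtain ⟨U, hUB, hUcov, hUinj⟩ := (B.filter (p ≤ ·)).exists_subset_coinitial_values h
  have hL : ∀ d ∈ L, d ∈ B ∧ d ≤ p := fun d hd => Finset.mem_filter.1 (hLB hd)
  have hU : ∀ u ∈ U, u ∈ B ∧ p ≤ u := fun u hu => Finset.mem_filter.1 (hUB hu)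
  have hLUB : L ∪ U ⊆ B := Finset.union_subset (fun d hd => (hL d hd).1) fun u hu => (hU u hu).1
  have hiso : IsFinPartIso (L ∪ U) h := by
    intro a₁ ha₁ a₂ ha₂
    refine ⟨fun hle => hh (hLUB ha₁) (hLUB ha₂) hle, fun hle => ?_⟩
    rcases Finset.mem_union.1 ha₁ with h₁ | h₁ <;> rcases Finset.mem_union.1 ha₂ with h₂ | h₂
    · exact (hLinj a₁ h₁ a₂ h₂ hle).le
    · exact (hL a₁ h₁).2.trans (hU a₂ h₂).2
    · exact absurd (le_antisymm (hh (hLUB ha₂) (hLUB ha₁) ((hL a₂ h₂).2.trans (hU a₁ h₁).2)) hle)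
        (hcross a₂ (hL a₂ h₂).1 a₁ (hU a₁ h₁).1 (hL a₂ h₂).2 (hU a₁ h₁).2)
    · exact (hUinj a₁ h₁ a₂ h₂ hle).le
  obtain ⟨g, hg, hgh⟩ := hIH _ h hiso
  refine ⟨g p, fun b hb hbp => ?_, fun b hb hpb => ?_⟩
  · obtain ⟨d, hd, hbd⟩ := hLcov b (Finset.mem_filter.2 ⟨hb, hbp⟩)
    calc h b ≤ h d := hbd
      _ = g d := (hgh d (Finset.mem_union_left _ hd)).symm
      _ ≤ g p := hg (hL d hd).2
  · obtain ⟨u, hu, hub⟩ := hUcov b (Finset.mem_filter.2 ⟨hb, hpb⟩)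
    calc g p ≤ g u := hg (hU u hu).2
      _ = h u := hgh u (Finset.mem_union_right _ hu)
      _ ≤ h b := hub

lemma MonotoneOn.update_insert [DecidableEq P] {B : Set P} {h : P → P} (hh : MonotoneOn h B)
    {p v : P} (hp : p ∉ B) (hbelow : ∀ b ∈ B, b ≤ p → h b ≤ v) (habove : ∀ b ∈ B, p ≤ b → v ≤ h b) :
    MonotoneOn (update h p v) (insert p B) := by
  have hne : ∀ b ∈ B, b ≠ p := fun b hb hbp => hp (hbp ▸ hb)
  rintro a (rfl | ha) b (rfl | hb) hab
  · exact le_rfl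
  · rw [update_self, update_of_ne (hne b hb)]; exact habove b hb hab
  · rw [update_self, update_of_ne (hne a ha)]; exact hbelow a ha hab
  · rw [update_of_ne (hne a ha), update_of_ne (hne b hb)]; exact hh ha hb hab

variable (P) in
structure FinMonoMap where
  dom : Finset P
  toFun : P → P
  monotoneOn : MonotoneOn toFun dom

namespace FinMonoMap

instance : Preorder (FinMonoMap P) where
  le x y := x.dom ⊆ y.dom ∧ Set.EqOn y.toFun x.toFun x.dom
  le_refl x := ⟨subset_rfl, Set.eqOn_refl _ _⟩
  le_trans x y z hxy hyz := ⟨hxy.1.trans hyz.1, (hyz.2.mono hxy.1).trans hxy.2⟩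

lemma le_def {x y : FinMonoMap P} : x ≤ y ↔ x.dom ⊆ y.dom ∧ Set.EqOn y.toFun x.toFun x.dom :=
  Iff.rfl

lemma exists_le_of_between (x : FinMonoMap P) {p v : P} (hp : p ∉ x.dom)
    (hbelow : ∀ b ∈ x.dom, b ≤ p → x.toFun b ≤ v) (habove : ∀ b ∈ x.dom, p ≤ b → v ≤ x.toFun b) :
    ∃ y, x ≤ y ∧ p ∈ y.dom ∧ y.toFun p = v := by
  classical
  have hmono : MonotoneOn (update x.toFun p v) ↑(insert p x.dom) := by
    rw [Finset.coe_insert]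
    exact x.monotoneOn.update_insert (by exact_mod_cast hp) hbelow habove
  refine ⟨⟨insert p x.dom, update x.toFun p v, hmono⟩, ⟨Finset.subset_insert p x.dom, ?_⟩,
    Finset.mem_insert_self p x.dom, update_self p v x.toFun⟩
  intro b hb
  exact update_of_ne (fun hbp : b = p => hp (hbp ▸ hb)) _ _

lemma exists_le_mem_dom (hIH : IHbarHomogeneous P) (x : FinMonoMap P) (p : P) :
    ∃ y, x ≤ y ∧ p ∈ y.dom := by
  by_cases hp : p ∈ x.dom
  · exact ⟨x, le_rfl, hp⟩
  obtain ⟨v, hbelow, habove⟩ := hIH.exists_between x.monotoneOn p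
  obtain ⟨y, hxy, hpy, -⟩ := x.exists_le_of_between hp hbelow habove
  exact ⟨y, hxy, hpy⟩

lemma exists_le_mem_image (hIPP : ∀ A : Finset P, ∃ z : P, ∀ a ∈ A, Incomp z a)
    (x : FinMonoMap P) (q : P) : ∃ y, x ≤ y ∧ ∃ z ∈ y.dom, y.toFun z = q := by
  obtain ⟨z, hz⟩ := hIPP x.dom
  have hzx : z ∉ x.dom := fun hzx => (hz z hzx).1 le_rfl
  -- a point incomparable to the whole domain may be sent anywhere
  obtain ⟨y, hxy, hzy, hyz⟩ := x.exists_le_of_between hzx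
    (fun b hb hbz => absurd hbz (hz b hb).2) (fun b hb hzb => absurd hzb (hz b hb).1) (v := q)
  exact ⟨y, hxy, z, hzy, hyz⟩

def cofinalAt (hIH : IHbarHomogeneous P) (hIPP : ∀ A : Finset P, ∃ z : P, ∀ a ∈ A, Incomp z a)
    (q : P) : Order.Cofinal (FinMonoMap P) where
  carrier := {y | q ∈ y.dom ∧ ∃ z ∈ y.dom, y.toFun z = q}
  isCofinal x := by
    obtain ⟨y, hxy, hqy⟩ := exists_le_mem_dom hIH x q
    obtain ⟨w, hyw, hqw⟩ := exists_le_mem_image hIPP y q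
    exact ⟨w, ⟨(le_def.1 hyw).1 hqy, hqw⟩, hxy.trans hyw⟩

lemma exists_monotone_eqOn_of_monotone {s : ℕ → FinMonoMap P} (hs : Monotone s)
    (hcover : ∀ p, ∃ n, p ∈ (s n).dom) :
    ∃ g : P → P, Monotone g ∧ ∀ n, Set.EqOn g (s n).toFun (s n).dom := by
  choose N hN using hcover
  have hg : ∀ n, Set.EqOn (fun p => (s (N p)).toFun p) (s n).toFun (s n).dom := by
    intro n p hp
    rcases le_total (N p) n with hle | hle
    · exact ((le_def.1 (hs hle)).2 (hN p)).symm
    · exact (le_def.1 (hs hle)).2 hp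
  refine ⟨fun p => (s (N p)).toFun p, fun p q hpq => ?_, hg⟩
  have hp : p ∈ (s (max (N p) (N q))).dom := (le_def.1 (hs (le_max_left _ _))).1 (hN p)
  have hq : q ∈ (s (max (N p) (N q))).dom := (le_def.1 (hs (le_max_right _ _))).1 (hN q)
  rw [hg _ hp, hg _ hq]
  exact (s _).monotoneOn hp hq hpq

end FinMonoMap

end

/-- A countable IH̄-homogeneous poset with the incomparable point property
(every finite subset has a point incomparable to all its members) is H̄Ē-homogeneous. -/
theorem IHbar_IPP_implies_HbarEbar (P : Type*) [PartialOrder P] [Countable P]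
    (hIH : IHbarHomogeneous P)
    (hIPP : ∀ A : Finset P, ∃ z : P, ∀ a ∈ A, Incomp z a) :
    HbarEbarHomogeneous P := by
  intro A f hf
  have : Encodable P := Encodable.ofCountable P
  let x₀ : FinMonoMap P := ⟨A, f, fun a ha b hb => hf a ha b hb⟩
  let 𝒟 := FinMonoMap.cofinalAt hIH hIPP
  have hs (q : P) := Order.sequenceOfCofinals.encode_mem x₀ 𝒟 q
  obtain ⟨g, hg, hgs⟩ := FinMonoMap.exists_monotone_eqOn_of_monotone
    (Order.sequenceOfCofinals.monotone x₀ 𝒟) fun q => ⟨_, (hs q).1⟩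
  refine ⟨g, hg, fun q => ?_, fun a ha => hgs 0 ha⟩
  obtain ⟨z, hz, hzq⟩ := (hs q).2
  exact ⟨z, (hgs _ hz).trans hzq⟩
end

section
/- Let P be a countable partial order which is IH-homogeneous (every finite partial isomorphism of P extends to a <-preserving map P → P) and which satisfies the incomparable point property: for every finite subset A of P there is z ∈ P with z ∥ a for all a ∈ A. Then P is HE-homogeneous (every <-preserving map between finite subsets of P extends to a surjective <-preserving map P → P) and MB-homogeneous (every injective <-preserving map between finite subsets of P extends to a bijective <-preserving map P → P). -/
/-- `P` is IH-homogeneous: every finite partial isomorphism extends to a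
`<`-preserving map `P → P`. -/
def IHHomogeneous (P : Type*) [PartialOrder P] : Prop :=
  ∀ (A : Finset P) (f : P → P), IsFinPartIso A f →
    ∃ g : P → P, StrictMono g ∧ ∀ a ∈ A, g a = f a

/-- `P` is HE-homogeneous: every `<`-preserving map between finite subsets extends to
a surjective `<`-preserving map `P → P`. -/
def HEHomogeneous (P : Type*) [PartialOrder P] : Prop :=
  ∀ (A : Finset P) (f : P → P), (∀ a₁ ∈ A, ∀ a₂ ∈ A, a₁ < a₂ → f a₁ < f a₂) →
    ∃ g : P → P, StrictMono g ∧ Function.Surjective g ∧ ∀ a ∈ A, g a = f a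

/-- `P` is MB-homogeneous: every injective `<`-preserving map between finite subsets
extends to a bijective `<`-preserving map `P → P`. -/
def MBHomogeneous (P : Type*) [PartialOrder P] : Prop :=
  ∀ (A : Finset P) (f : P → P), Set.InjOn f ↑A →
    (∀ a₁ ∈ A, ∀ a₂ ∈ A, a₁ < a₂ → f a₁ < f a₂) →
    ∃ g : P → P, StrictMono g ∧ Function.Bijective g ∧ ∀ a ∈ A, g a = f a

/-! The extension `g` is built by a back-and-forth argument: it is the union of an increasing chain
of finite strictly monotone partial maps, along an enumeration of `P` that puts every point both
into the domain and into the range.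

To add a point `p` to the domain we need a value in the cut between the images of the points below
`p` and those above `p`. Choosing representatives of the maximal values below and the minimal
values above `p` gives a partial isomorphism, and an IH-extension of it sends `p` into the cut. IH
maps fixing the lower side of the cut and moving a point of the upper side into it show that the
cut has no least (or, when the upper side is empty, no greatest) element, so it is infinite and the
value can be chosen outside the current range. To add a point `t` to the range, send a point
incomparable to the whole domain to `t`; this imposes no constraint at all. Avoiding the range
keeps injective partial maps injective, which gives MB-homogeneity. -/

open Set Function

theorem Set.Nonempty.infinite_of_forall_exists_gt {α : Type*} [Preorder α] {s : Set α}
    (hs : s.Nonempty) (h : ∀ a ∈ s, ∃ b ∈ s, a < b) : s.Infinite := fun hfin =>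
  let ⟨m, hm⟩ := hfin.exists_maximal hs
  let ⟨_, hb, hmb⟩ := h m hm.prop
  hm.not_gt hb hmb

theorem Set.Nonempty.infinite_of_forall_exists_lt {α : Type*} [Preorder α] {s : Set α}
    (hs : s.Nonempty) (h : ∀ a ∈ s, ∃ b ∈ s, b < a) : s.Infinite :=
  Set.Nonempty.infinite_of_forall_exists_gt (α := αᵒᵈ) hs h

theorem Finset.exists_maximal_representatives {α β : Type*} [PartialOrder β] (s : Finset α)
    (f : α → β) :
    ∃ t ⊆ s, (∀ x ∈ t, ∀ y ∈ t, f x ≤ f y → x = y) ∧ ∀ a ∈ s, ∃ x ∈ t, f a ≤ f x := by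
  classical
  let B := {b ∈ s.image f | Maximal (· ∈ s.image f) b}
  obtain ⟨t, hts, hinj, htB⟩ := exists_subset_injOn_image_eq_of_surjOn (s : Set α) B
    fun b hb => by simpa using (mem_filter.1 hb).1
  have hmax (x : α) (hx : x ∈ t) : Maximal (· ∈ s.image f) (f x) :=
    (mem_filter.1 (htB ▸ mem_image_of_mem f hx)).2
  refine ⟨t, coe_subset.1 hts,
    fun x hx y hy hxy => hinj hx hy ((hmax x hx).eq_of_le (hmax y hy).prop hxy), fun a ha => ?_⟩
  obtain ⟨b, hab, hb⟩ := (s.image f).exists_le_maximal (mem_image_of_mem f ha)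
  obtain ⟨x, hx, rfl⟩ := mem_image.1 (htB ▸ mem_filter.2 ⟨hb.prop, hb⟩ : b ∈ t.image f)
  exact ⟨x, hx, hab⟩

/-- A finite partial map on `α`: only the values of `toFun` on `dom` are meaningful. -/
structure FinPartialMap (α : Type*) where
  dom : Finset α
  toFun : α → α

namespace FinPartialMap

variable {α : Type*}

instance : Preorder (FinPartialMap α) where
  le u v := u.dom ⊆ v.dom ∧ EqOn v.toFun u.toFun u.dom
  le_refl _ := ⟨subset_rfl, fun _ _ => rfl⟩
  le_trans _ _ _ huv hvw := ⟨huv.1.trans hvw.1, fun _ ha => (hvw.2 (huv.1 ha)).trans (huv.2 ha)⟩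

theorem toFun_eq_of_monotone {s : ℕ → FinPartialMap α} (hs : Monotone s) {m n : ℕ} {x : α}
    (hm : x ∈ (s m).dom) (hn : x ∈ (s n).dom) : (s m).toFun x = (s n).toFun x := by
  rcases le_total m n with h | h
  · exact ((hs h).2 hm).symm
  · exact (hs h).2 hn

theorem exists_limit [Countable α] (p : FinPartialMap α → Prop)
    (hstep : ∀ u, p u → ∀ t, ∃ v, u ≤ v ∧ p v ∧ t ∈ v.dom ∧ t ∈ v.toFun '' v.dom)
    {u : FinPartialMap α} (hu : p u) :
    ∃ g : α → α, Surjective g ∧ EqOn g u.toFun u.dom ∧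
      ∀ x y, ∃ v, p v ∧ x ∈ v.dom ∧ y ∈ v.dom ∧ g x = v.toFun x ∧ g y = v.toFun y := by
  let _ : Encodable α := .ofCountable α
  let 𝒟 (t : α) : Order.Cofinal {v // p v} :=
    ⟨{v | t ∈ v.1.dom ∧ t ∈ v.1.toFun '' v.1.dom}, fun v =>
      let ⟨w, hvw, hw, ht⟩ := hstep v.1 v.2 t
      ⟨⟨w, hw⟩, ht, hvw⟩⟩
  let seq := Order.sequenceOfCofinals ⟨u, hu⟩ 𝒟
  let s (n : ℕ) : FinPartialMap α := (seq n).1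
  have hs : Monotone s := (Subtype.mono_coe _).comp (Order.sequenceOfCofinals.monotone _ _)
  have hmem (t : α) : t ∈ (s (Encodable.encode t + 1)).dom ∧
      t ∈ (s (Encodable.encode t + 1)).toFun '' (s (Encodable.encode t + 1)).dom :=
    Order.sequenceOfCofinals.encode_mem (⟨u, hu⟩ : {v // p v}) 𝒟 t
  let g (x : α) : α := (s (Encodable.encode x + 1)).toFun x
  have hg (n : ℕ) : EqOn g (s n).toFun (s n).dom := fun x hx =>
    toFun_eq_of_monotone hs (hmem x).1 hx
  refine ⟨g, fun t => ?_, hg 0, fun x y => ?_⟩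
  · obtain ⟨b, hb, hbt⟩ := (hmem t).2
    exact ⟨b, (hg _ hb).trans hbt⟩
  · let n := max (Encodable.encode x + 1) (Encodable.encode y + 1)
    have hx : x ∈ (s n).dom := (hs (le_max_left _ _)).1 (hmem x).1
    have hy : y ∈ (s n).dom := (hs (le_max_right _ _)).1 (hmem y).1
    exact ⟨s n, (seq n).2, hx, hy, hg n hx, hg n hy⟩

variable [DecidableEq α]

protected def insert (u : FinPartialMap α) (p q : α) : FinPartialMap α :=
  ⟨insert p u.dom, update u.toFun p q⟩

variable {u : FinPartialMap α} {p q : α}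

theorem le_insert (hp : p ∉ u.dom) (q : α) : u ≤ u.insert p q :=
  ⟨Finset.subset_insert _ _, fun _ ha => update_of_ne (ne_of_mem_of_not_mem ha hp) _ _⟩

theorem strictMonoOn_insert [Preorder α] (hp : p ∉ u.dom) (hu : StrictMonoOn u.toFun u.dom)
    (hlt : ∀ a ∈ u.dom, a < p → u.toFun a < q) (hgt : ∀ a ∈ u.dom, p < a → q < u.toFun a) :
    StrictMonoOn (u.insert p q).toFun (u.insert p q).dom := by
  have heq := (le_insert hp q).2
  intro a ha b hb hab
  simp only [FinPartialMap.insert, Finset.coe_insert, Set.mem_insert_iff, Finset.mem_coe] at ha hb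
  rcases ha with rfl | ha <;> rcases hb with rfl | hb
  · exact absurd hab (lt_irrefl _)
  · rw [heq hb]
    simpa [FinPartialMap.insert] using hgt b hb hab
  · rw [heq ha]
    simpa [FinPartialMap.insert] using hlt a ha hab
  · rw [heq ha, heq hb]
    exact hu ha hb hab

theorem injOn_insert (hp : p ∉ u.dom) (hu : InjOn u.toFun u.dom) (hq : q ∉ u.toFun '' u.dom) :
    InjOn (u.insert p q).toFun (u.insert p q).dom := by
  have heq := (le_insert hp q).2
  simp only [FinPartialMap.insert, Finset.coe_insert] at heq ⊢
  rw [Set.injOn_insert (by simpa using hp), heq.injOn_iff, heq.image_eq, update_self]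
  exact ⟨hu, hq⟩

end FinPartialMap

def HasIncomparablePoints (P : Type*) [PartialOrder P] : Prop :=
  ∀ A : Finset P, ∃ z : P, ∀ a ∈ A, Incomp z a

section Poset

variable {P : Type*} [PartialOrder P]

def cut (L U : Finset P) : Set P := {q | (∀ l ∈ L, l < q) ∧ ∀ u ∈ U, q < u}

theorem mem_cut_image [DecidableEq P] [DecidableLT P] {A : Finset P} {f : P → P} {p q : P} :
    q ∈ cut ((A.filter (· < p)).image f) ((A.filter (p < ·)).image f) ↔
      (∀ a ∈ A, a < p → f a < q) ∧ ∀ a ∈ A, p < a → q < f a := by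
  simp only [cut, Set.mem_ofPred_eq, Finset.forall_mem_image, Finset.mem_filter, and_imp]

theorem isFinPartIso_union [DecidableEq P] {X Y : Finset P} {f : P → P} {p : P}
    (hX : ∀ x ∈ X, x < p) (hY : ∀ y ∈ Y, p < y) (hf : StrictMonoOn f ↑(X ∪ Y))
    (hfX : ∀ x₁ ∈ X, ∀ x₂ ∈ X, f x₁ ≤ f x₂ → x₁ = x₂)
    (hfY : ∀ y₁ ∈ Y, ∀ y₂ ∈ Y, f y₁ ≤ f y₂ → y₁ = y₂) : IsFinPartIso (X ∪ Y) f := by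
  intro a ha b hb
  refine ⟨fun hab => hf.monotoneOn ha hb hab, fun hfab => ?_⟩
  rcases Finset.mem_union.1 ha with ha' | ha' <;> rcases Finset.mem_union.1 hb with hb' | hb'
  · exact (hfX a ha' b hb' hfab).le
  · exact ((hX a ha').trans (hY b hb')).le
  · exact absurd hfab (hf hb ha ((hX b hb').trans (hY a ha'))).not_ge
  · exact (hfY a ha' b hb' hfab).le

namespace IHHomogeneous

theorem exists_between_image (hIH : IHHomogeneous P) {A : Finset P} {f : P → P}
    (hf : StrictMonoOn f A) (p : P) :
    ∃ q, (∀ a ∈ A, a < p → f a < q) ∧ ∀ a ∈ A, p < a → q < f a := by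
  classical
  obtain ⟨X, hXA, hfX, hX⟩ := (A.filter (· < p)).exists_maximal_representatives f
  obtain ⟨Y, hYA, hfY, hY⟩ :=
    (A.filter (p < ·)).exists_maximal_representatives (OrderDual.toDual ∘ f)
  have hXp (x : P) (hx : x ∈ X) : x < p := (Finset.mem_filter.1 (hXA hx)).2
  have hYp (y : P) (hy : y ∈ Y) : p < y := (Finset.mem_filter.1 (hYA hy)).2
  have hXYA : ↑(X ∪ Y) ⊆ (A : Set P) := Finset.coe_subset.2 <| Finset.union_subset
    (hXA.trans (Finset.filter_subset _ _)) (hYA.trans (Finset.filter_subset _ _))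
  obtain ⟨g, hg, hgf⟩ := hIH (X ∪ Y) f <| isFinPartIso_union hXp hYp (hf.mono hXYA) hfX
    fun y₁ h₁ y₂ h₂ h => (hfY y₂ h₂ y₁ h₁ h).symm
  refine ⟨g p, fun a ha hap => ?_, fun a ha hpa => ?_⟩
  · obtain ⟨x, hx, hax⟩ := hX a (Finset.mem_filter.2 ⟨ha, hap⟩)
    exact hax.trans_lt ((hgf x (Finset.mem_union_left _ hx)).symm.trans_lt (hg (hXp x hx)))
  · obtain ⟨y, hy, hay⟩ := hY a (Finset.mem_filter.2 ⟨ha, hpa⟩)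
    exact ((hg (hYp y hy)).trans_eq (hgf y (Finset.mem_union_right _ hy))).trans_le hay

theorem exists_fix_and_send (hIH : IHHomogeneous P) (S : Finset P) {y q : P}
    (hy : ∀ s ∈ S, s < y) (hq : ∀ s ∈ S, s < q) :
    ∃ g : P → P, StrictMono g ∧ (∀ s ∈ S, g s = s) ∧ g y = q := by
  classical
  have hyS : y ∉ S := fun h => lt_irrefl y (hy y h)
  have hupd (s : P) (hs : s ∈ S) : update id y q s = s :=
    update_of_ne (ne_of_mem_of_not_mem hs hyS) _ _
  obtain ⟨g, hg, hgS⟩ := hIH (insert y S) (update id y q) <| by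
    intro a ha b hb
    rw [Finset.mem_insert] at ha hb
    rcases ha with rfl | ha <;> rcases hb with rfl | hb
    · simp
    · rw [update_self, hupd b hb]
      exact iff_of_false (hy b hb).not_ge (hq b hb).not_ge
    · rw [update_self, hupd a ha]
      exact iff_of_true (hy a ha).le (hq a ha).le
    · rw [hupd a ha, hupd b hb]
  refine ⟨g, hg, fun s hs => ?_, ?_⟩
  · rw [hgS s (Finset.mem_insert_of_mem hs), hupd s hs]
  · rw [hgS y (Finset.mem_insert_self _ _), update_self]

theorem infinite_cut (hIH : IHHomogeneous P) (hIPP : HasIncomparablePoints P)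
    {L U : Finset P} (hne : (cut L U).Nonempty) : (cut L U).Infinite := by
  rcases U.eq_empty_or_nonempty with rfl | ⟨u, hu⟩
  · rcases L.eq_empty_or_nonempty with rfl | ⟨l, hl⟩
    · intro hfin
      obtain ⟨z, hz⟩ := hIPP hfin.toFinset
      exact (hz z (by simp [cut])).1 le_rfl
    · refine hne.infinite_of_forall_exists_gt fun q hq => ?_
      obtain ⟨g, hg, -, hgl⟩ := hIH.exists_fix_and_send ∅ (y := l) (q := q) (by simp) (by simp)
      have hqg : q < g q := hgl.symm.trans_lt (hg (hq.1 l hl))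
      exact ⟨g q, ⟨fun l' hl' => (hq.1 l' hl').trans hqg, by simp⟩, hqg⟩
  · refine hne.infinite_of_forall_exists_lt fun q hq => ?_
    obtain ⟨g, hg, hgL, hgu⟩ :=
      hIH.exists_fix_and_send L (fun l hl => (hq.1 l hl).trans (hq.2 u hu)) hq.1
    have hgq : g q < q := (hg (hq.2 u hu)).trans_eq hgu
    exact ⟨g q, ⟨fun l hl => (hgL l hl).symm.trans_lt (hg (hq.1 l hl)),
      fun u' hu' => hgq.trans (hq.2 u' hu')⟩, hgq⟩

end IHHomogeneous

namespace FinPartialMap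

variable {u : FinPartialMap P}

theorem exists_le_mem_dom (hIH : IHHomogeneous P) (hIPP : HasIncomparablePoints P)
    (hu : StrictMonoOn u.toFun u.dom) (t : P) : ∃ v, u ≤ v ∧ StrictMonoOn v.toFun v.dom ∧
      (InjOn u.toFun u.dom → InjOn v.toFun v.dom) ∧ t ∈ v.dom := by
  classical
  by_cases ht : t ∈ u.dom
  · exact ⟨u, le_rfl, hu, id, ht⟩
  obtain ⟨q₀, hq₀⟩ := hIH.exists_between_image hu t
  obtain ⟨q, hq, hqA⟩ := (hIH.infinite_cut hIPP ⟨q₀, mem_cut_image.2 hq₀⟩).exists_notMem_finset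
    (u.dom.image u.toFun)
  obtain ⟨hlt, hgt⟩ := mem_cut_image.1 hq
  exact ⟨u.insert t q, le_insert ht q, strictMonoOn_insert ht hu hlt hgt,
    fun hinj => injOn_insert ht hinj (by simpa using hqA), Finset.mem_insert_self _ _⟩

theorem exists_le_mem_image (hIPP : HasIncomparablePoints P) (hu : StrictMonoOn u.toFun u.dom)
    (t : P) : ∃ v, u ≤ v ∧ StrictMonoOn v.toFun v.dom ∧
      (InjOn u.toFun u.dom → InjOn v.toFun v.dom) ∧ t ∈ v.toFun '' v.dom := by
  classical
  by_cases ht : t ∈ u.toFun '' u.dom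
  · exact ⟨u, le_rfl, hu, id, ht⟩
  obtain ⟨z, hz⟩ := hIPP u.dom
  have hzA : z ∉ u.dom := fun h => (hz z h).1 le_rfl
  refine ⟨u.insert z t, le_insert hzA t,
    strictMonoOn_insert hzA hu (fun a ha h => absurd h.le (hz a ha).2)
      (fun a ha h => absurd h.le (hz a ha).1),
    fun hinj => injOn_insert hzA hinj ht, z, Finset.mem_insert_self _ _,
    by simp [FinPartialMap.insert]⟩

theorem exists_le_mem_dom_and_image (hIH : IHHomogeneous P) (hIPP : HasIncomparablePoints P)
    (hu : StrictMonoOn u.toFun u.dom) (t : P) : ∃ v, u ≤ v ∧ StrictMonoOn v.toFun v.dom ∧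
      (InjOn u.toFun u.dom → InjOn v.toFun v.dom) ∧ t ∈ v.dom ∧ t ∈ v.toFun '' v.dom := by
  obtain ⟨v, huv, hv, hinj, htv⟩ := exists_le_mem_dom hIH hIPP hu t
  obtain ⟨w, hvw, hw, hinj', htw⟩ := exists_le_mem_image hIPP hv t
  exact ⟨w, huv.trans hvw, hw, hinj' ∘ hinj, hvw.1 htv, htw⟩

end FinPartialMap

end Poset

/-- A countable IH-homogeneous poset with the incomparable point property
(every finite subset has a point incomparable to all its members) is HE-homogeneous
and MB-homogeneous. -/
theorem IH_IPP_implies_HE_MB (P : Type*) [PartialOrder P] [Countable P]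
    (hIH : IHHomogeneous P)
    (hIPP : ∀ A : Finset P, ∃ z : P, ∀ a ∈ A, Incomp z a) :
    HEHomogeneous P ∧ MBHomogeneous P := by
  have step (u : FinPartialMap P) (hu : StrictMonoOn u.toFun u.dom) :=
    FinPartialMap.exists_le_mem_dom_and_image hIH hIPP hu
  refine ⟨fun A f hf => ?_, fun A f hinj hf => ?_⟩
  · obtain ⟨g, hsurj, hgf, hloc⟩ := FinPartialMap.exists_limit
      (fun u => StrictMonoOn u.toFun u.dom)
      (fun u hu t => let ⟨v, huv, hv, _, ht⟩ := step u hu t; ⟨v, huv, hv, ht⟩) (u := ⟨A, f⟩) hf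
    refine ⟨g, fun x y hxy => ?_, hsurj, hgf⟩
    obtain ⟨v, hv, hx, hy, hgx, hgy⟩ := hloc x y
    rw [hgx, hgy]
    exact hv hx hy hxy
  · obtain ⟨g, hsurj, hgf, hloc⟩ := FinPartialMap.exists_limit
      (fun u => StrictMonoOn u.toFun u.dom ∧ InjOn u.toFun u.dom)
      (fun u hu t => let ⟨v, huv, hv, hinj, ht⟩ := step u hu.1 t; ⟨v, huv, ⟨hv, hinj hu.2⟩, ht⟩)
      (u := ⟨A, f⟩) ⟨hf, hinj⟩
    refine ⟨g, fun x y hxy => ?_, ⟨fun x y hxy => ?_, hsurj⟩, hgf⟩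
    · obtain ⟨v, ⟨hv, -⟩, hx, hy, hgx, hgy⟩ := hloc x y
      rw [hgx, hgy]
      exact hv hx hy hxy
    · obtain ⟨v, ⟨-, hv⟩, hx, hy, hgx, hgy⟩ := hloc x y
      rw [hgx, hgy] at hxy
      exact hv hx hy hxy
end

section
/- Let X be a linear order and f : X → X a ≤-preserving map (x ≤ y → f x ≤ f y). Define x ~ y iff there exist k, l, m ∈ ℕ with f^[k] x ≤ f^[l] y and f^[l] y ≤ f^[m] x, where f^[n] denotes the n-th iterate of f. Then ~ is an equivalence relation on X, and each of its equivalence classes is convex: if x ~ y, x ≤ z and z ≤ y, then x ~ z. -/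
/-!
Call `x` orbitally below `y` when some iterate of `x` lies below some iterate of `y`. For monotone
`f` this is a preorder: applying `f^[n]` to `f^[k] x ≤ f^[l] y` shifts both indices by `n`, which
lets two such inequalities be chained. The orbital relation is exactly its symmetrization, hence an
equivalence, and since `≤` implies orbitally below, its classes are convex.
-/

/-- The orbital relation of a ≤-preserving map `f` on a linear order:
`x ~ y` iff `f^[k] x ≤ f^[l] y ≤ f^[m] x` for some `k, l, m ∈ ℕ`. -/
def OrbRel {X : Type*} [LinearOrder X] (f : X → X) (x y : X) : Prop :=
  ∃ k l m : ℕ, f^[k] x ≤ f^[l] y ∧ f^[l] y ≤ f^[m] x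

section

variable {X : Type*} [Preorder X] {f : X → X} {x y z : X}

theorem Monotone.iterate_add_le_iterate_add (hf : Monotone f) {i j : ℕ} (h : f^[i] x ≤ f^[j] y)
    (n : ℕ) : f^[n + i] x ≤ f^[n + j] y := by
  simpa only [Function.iterate_add_apply] using hf.iterate n h

def OrbLE (f : X → X) (x y : X) : Prop :=
  ∃ k l : ℕ, f^[k] x ≤ f^[l] y

theorem OrbLE.of_le (h : x ≤ y) : OrbLE f x y :=
  ⟨0, 0, h⟩

theorem OrbLE.trans (hf : Monotone f) (hxy : OrbLE f x y) (hyz : OrbLE f y z) : OrbLE f x z := by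
  obtain ⟨k, l, hkl⟩ := hxy
  obtain ⟨p, q, hpq⟩ := hyz
  refine ⟨p + k, l + q, ?_⟩
  calc f^[p + k] x ≤ f^[p + l] y := hf.iterate_add_le_iterate_add hkl p
    _ = f^[l + p] y := by rw [Nat.add_comm]
    _ ≤ f^[l + q] z := hf.iterate_add_le_iterate_add hpq l

end

theorem orbRel_iff_orbLE {X : Type*} [LinearOrder X] {f : X → X} (hf : Monotone f) {x y : X} :
    OrbRel f x y ↔ OrbLE f x y ∧ OrbLE f y x := by
  constructor
  · rintro ⟨k, l, m, hkl, hlm⟩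
    exact ⟨⟨k, l, hkl⟩, ⟨l, m, hlm⟩⟩
  · rintro ⟨⟨k, l, hkl⟩, ⟨l', m, hlm⟩⟩
    refine ⟨l' + k, l' + l, l + m, hf.iterate_add_le_iterate_add hkl l', ?_⟩
    rw [Nat.add_comm l' l]
    exact hf.iterate_add_le_iterate_add hlm l

/-- For a ≤-preserving map `f` of a linear order `X`, the orbital relation is an
equivalence relation whose classes are convex. -/
theorem orbRel_equivalence_convex {X : Type*} [LinearOrder X] (f : X → X)
    (hf : Monotone f) :
    Equivalence (OrbRel f) ∧
      ∀ x y z : X, OrbRel f x y → x ≤ z → z ≤ y → OrbRel f x z := by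
  refine ⟨⟨fun x => ?_, fun h => ?_, fun hxy hyz => ?_⟩, fun x y z hxy hxz hzy => ?_⟩ <;>
    simp only [orbRel_iff_orbLE hf] at *
  · exact ⟨.of_le le_rfl, .of_le le_rfl⟩
  · exact h.symm
  · exact ⟨hxy.1.trans hf hyz.1, hyz.2.trans hf hxy.2⟩
  · exact ⟨.of_le hxz, (OrbLE.of_le hzy).trans hf hxy.2⟩
end
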